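/- arXiv:1307.3073 — 6 statements merged into one kernel-verified Lean document; each statement's English description precedes it below -/
import Mathlib

section
/- Every permutation that contains a (2r+4)×(2r+4)-grid has width at least r. -/
/-- A point in the plane. -/
abbrev Pt := ℕ × ℕ
/-- A (discrete) interval, given by its two endpoints. -/
abbrev Iv := ℕ × ℕ
/-- An axis-parallel rectangle: a pair (x-interval, y-interval). -/
abbrev Rect := Iv × Iv

/-- The α-coordinate of a point (α ∈ {1,2} encoded as Fin 2). -/
def coordPt (α : Fin 2) (p : Pt) : ℕ := if α = 0 then p.1 else p.2

/-- The α-projection of a rectangle. -/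
def rproj (α : Fin 2) (R : Rect) : Iv := if α = 0 then R.1 else R.2

/-- Two intervals intersect. -/
def ivOverlap (I J : Iv) : Prop := I.1 ≤ J.2 ∧ J.1 ≤ I.2

instance : ∀ I J, Decidable (ivOverlap I J) := fun I J => by
  unfold ivOverlap; infer_instance

/-- Interval `I` lies strictly before interval `J`. -/
def ivLt (I J : Iv) : Prop := I.2 < J.1

instance : ∀ I J, Decidable (ivLt I J) := fun I J => by
  unfold ivLt; infer_instance

/-- Interval containment. -/
def ivSub (I J : Iv) : Prop := J.1 ≤ I.1 ∧ I.2 ≤ J.2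

instance : ∀ I J, Decidable (ivSub I J) := fun I J => by
  unfold ivSub; infer_instance

/-- Two rectangles α-view each other: their α-projections intersect. -/
def rviews (α : Fin 2) (R R' : Rect) : Prop := ivOverlap (rproj α R) (rproj α R')

instance : ∀ α R R', Decidable (rviews α R R') := fun α R R' => by
  unfold rviews; infer_instance

/-- The degenerate rectangle corresponding to a point. -/
def ptRect (p : Pt) : Rect := ((p.1, p.1), (p.2, p.2))

/-- The bounding box of two rectangles. -/
def bbox (R1 R2 : Rect) : Rect :=
  ((min R1.1.1 R2.1.1, max R1.1.2 R2.1.2), (min R1.2.1 R2.2.1, max R1.2.2 R2.2.2))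

/-- A rectangle family (as a multiset of rectangles). -/
abbrev Fam := Multiset Rect

/-- A family is `d`-wide: every rectangle α-views fewer than `d` other rectangles. -/
def Wide (d : ℕ) (F : Fam) : Prop :=
  ∀ R ∈ F, ∀ α : Fin 2,
    Multiset.card (Multiset.filter (fun R' => rviews α R R') (F.erase R)) < d

/-- One merge step: two rectangles of the family are replaced by their bounding box. -/
def MergeStep (F F' : Fam) : Prop :=
  ∃ R1 R2, R1 ∈ F ∧ R2 ∈ F.erase R1 ∧ F' = bbox R1 R2 ::ₘ ((F.erase R1).erase R2)

/-- A point set is in general position: no two points share an x- or y-coordinate. -/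
def GenPos (P : Finset Pt) : Prop :=
  ∀ p ∈ P, ∀ q ∈ P, p ≠ q → p.1 ≠ q.1 ∧ p.2 ≠ q.2

/-- `L` is a decomposition of the point set `P`: it starts with the degenerate
rectangles of `P`, each step is a merge, and it ends with a single rectangle. -/
def IsDecomp (P : Finset Pt) (L : List Fam) : Prop :=
  L.head? = some (Multiset.map ptRect P.val) ∧ List.Chain' MergeStep L ∧
  ∃ F, L.getLast? = some F ∧ Multiset.card F = 1

/-- `P` admits a `d`-wide decomposition. -/
def HasWidthLE (P : Finset Pt) (d : ℕ) : Prop :=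
  ∃ L, IsDecomp P L ∧ ∀ F ∈ L, Wide d F

/-- The width of a permutation: the least `d` such that it has a `d`-wide decomposition. -/
noncomputable def permWidth (P : Finset Pt) : ℕ := sInf {d | HasWidthLE P d}

/-- `σ` is a subpattern of `π`: an injection preserving both coordinate orders. -/
def Subpattern (σ π : Finset Pt) : Prop :=
  ∃ φ : Pt → Pt, Set.InjOn φ ↑σ ∧ (∀ p ∈ σ, φ p ∈ π) ∧
    ∀ p ∈ σ, ∀ q ∈ σ,
      (p.1 < q.1 ↔ (φ p).1 < (φ q).1) ∧ (p.2 < q.2 ↔ (φ p).2 < (φ q).2)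

/-- `q` lies strictly between `p` and `p'` in coordinate `α`. -/
def Between (α : Fin 2) (p p' q : Pt) : Prop :=
  min (coordPt α p) (coordPt α p') < coordPt α q ∧
    coordPt α q < max (coordPt α p) (coordPt α p')

instance : ∀ α p p' q, Decidable (Between α p p' q) := fun _ _ _ _ => by
  unfold Between; infer_instance

/-- `{p,p'}` is a `d`-close pair of the point set `S`: in each coordinate, fewer than
`d` points of `S` lie strictly between them. -/
def ClosePair (d : ℕ) (S : Finset Pt) (p p' : Pt) : Prop :=
  ∀ α : Fin 2, (S.filter (Between α p p')).card < d

/-- `S` has a `d`-close pair. -/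
def HasClosePair (d : ℕ) (S : Finset Pt) : Prop :=
  ∃ p ∈ S, ∃ q ∈ S, p ≠ q ∧ ClosePair d S p q

/-- `P` contains an `s × s`-grid: there are monotone threshold sequences in both
coordinates such that each of the `s²` cells contains a point of `P`. -/
def ContainsGrid (s : ℕ) (P : Finset Pt) : Prop :=
  ∃ a b : Fin (s+1) → ℕ, Monotone a ∧ Monotone b ∧
    ∀ i j : Fin s, ∃ p ∈ P,
      a i.castSucc ≤ p.1 ∧ p.1 < a i.succ ∧ b j.castSucc ≤ p.2 ∧ p.2 < b j.succ

/-- The canonical `r × r`-grid permutation. -/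
def canonGrid (r : ℕ) : Finset Pt :=
  (Finset.Icc 1 r ×ˢ Finset.Icc 1 r).image
    (fun ij => ((ij.2 - 1) * r + (r - ij.1 + 1), (ij.1 - 1) * r + ij.2))

/-- A point set is increasing: the x-order and y-order coincide. -/
def IncreasingPts (S : Set Pt) : Prop := ∀ p ∈ S, ∀ q ∈ S, (p.1 < q.1 ↔ p.2 < q.2)

/-- A point set is decreasing: the x-order and y-order are opposite. -/
def DecreasingPts (S : Set Pt) : Prop := ∀ p ∈ S, ∀ q ∈ S, (p.1 < q.1 ↔ q.2 < p.2)

/-- A point set is monotone: increasing or decreasing. -/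
def MonotonePts (S : Set Pt) : Prop := IncreasingPts S ∨ DecreasingPts S

/-- `P` can be partitioned into at most `t` increasing parts. -/
def TIncreasing (t : ℕ) (P : Finset Pt) : Prop :=
  ∃ f : Pt → ℕ, (∀ p ∈ P, f p < t) ∧ ∀ c, IncreasingPts {p | p ∈ P ∧ f p = c}

/-- `P` can be partitioned into at most `t` monotone parts. -/
def TMonotone (t : ℕ) (P : Finset Pt) : Prop :=
  ∃ f : Pt → ℕ, (∀ p ∈ P, f p < t) ∧ ∀ c, MonotonePts {p | p ∈ P ∧ f p = c}

/-! ### Auxiliary development for stmt4 -/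

/-- Geometric membership of a point in a rectangle region. -/
def inRgn (p : Pt) (R : Rect) : Prop :=
  R.1.1 ≤ p.1 ∧ p.1 ≤ R.1.2 ∧ R.2.1 ≤ p.2 ∧ p.2 ≤ R.2.2

/-- Every point of `P` lies in some rectangle of the family `F`. -/
def CoverF (P : Finset Pt) (F : Fam) : Prop := ∀ p ∈ P, ∃ R ∈ F, inRgn p R

lemma inRgn_coord {p : Pt} {R : Rect} (h : inRgn p R) (α : Fin 2) :
    (rproj α R).1 ≤ coordPt α p ∧ coordPt α p ≤ (rproj α R).2 := by
  obtain ⟨h1, h2, h3, h4⟩ := h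
  fin_cases α <;> simp [rproj, coordPt] <;> omega

lemma inRgn_bbox_left {p : Pt} (R1 R2 : Rect) (h : inRgn p R1) : inRgn p (bbox R1 R2) := by
  obtain ⟨h1, h2, h3, h4⟩ := h
  refine ⟨?_, ?_, ?_, ?_⟩ <;> simp [bbox] <;> omega

lemma inRgn_bbox_right {p : Pt} (R1 R2 : Rect) (h : inRgn p R2) : inRgn p (bbox R1 R2) := by
  obtain ⟨h1, h2, h3, h4⟩ := h
  refine ⟨?_, ?_, ?_, ?_⟩ <;> simp [bbox] <;> omega

/-- The set of grid-cells (in one coordinate) met by an interval. -/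
def spanS (s : ℕ) (c : Fin (s+1) → ℕ) (I : Iv) : Finset (Fin s) :=
  Finset.univ.filter (fun i => I.1 < c i.succ ∧ c i.castSucc ≤ I.2)

lemma mem_spanS {s : ℕ} {c : Fin (s+1) → ℕ} {I : Iv} {i : Fin s} :
    i ∈ spanS s c I ↔ I.1 < c i.succ ∧ c i.castSucc ≤ I.2 := by
  simp [spanS]

lemma spanS_point {s : ℕ} {c : Fin (s+1) → ℕ} (hc : Monotone c) (x : ℕ) :
    (spanS s c (x, x)).card ≤ 1 := by
  refine Finset.card_le_one.mpr (fun i hi j hj => ?_)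
  rw [mem_spanS] at hi hj
  simp only at hi hj
  by_contra hne
  rcases lt_or_gt_of_ne (fun h : i.val = j.val => hne (Fin.ext h)) with hlt | hlt
  · have : c i.succ ≤ c j.castSucc := hc (by rw [Fin.le_def]; simp; omega)
    omega
  · have : c j.succ ≤ c i.castSucc := hc (by rw [Fin.le_def]; simp; omega)
    omega

/-- A rectangle is small: it meets at most 2 cells in each coordinate. -/
def SmallR {s : ℕ} (thr : Fin 2 → Fin (s+1) → ℕ) (R : Rect) : Prop :=
  ∀ α : Fin 2, (spanS s (thr α) (rproj α R)).card ≤ 2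

/-- The other coordinate. -/
def otherC (α : Fin 2) : Fin 2 := if α = 0 then 1 else 0

lemma cover_step {P : Finset Pt} {F F' : Fam} (hm : MergeStep F F') (h : CoverF P F) :
    CoverF P F' := by
  obtain ⟨R1, R2, hR1, hR2, rfl⟩ := hm
  intro p hp
  obtain ⟨Q, hQ, hin⟩ := h p hp
  by_cases h1 : Q = R1
  · exact ⟨bbox R1 R2, Multiset.mem_cons_self _ _, inRgn_bbox_left R1 R2 (h1 ▸ hin)⟩
  by_cases h2 : Q = R2
  · exact ⟨bbox R1 R2, Multiset.mem_cons_self _ _, inRgn_bbox_right R1 R2 (h2 ▸ hin)⟩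
  · exact ⟨Q, Multiset.mem_cons_of_mem
      ((Multiset.mem_erase_of_ne h2).mpr ((Multiset.mem_erase_of_ne h1).mpr hQ)), hin⟩

lemma cover_init (P : Finset Pt) : CoverF P (Multiset.map ptRect P.val) := by
  intro p hp
  exact ⟨ptRect p, Multiset.mem_map_of_mem _ hp, le_refl _, le_refl _, le_refl _, le_refl _⟩

lemma small_init {s : ℕ} {thr : Fin 2 → Fin (s+1) → ℕ} (hmon : ∀ α, Monotone (thr α))
    (P : Finset Pt) : ∀ Q ∈ Multiset.map ptRect P.val, SmallR thr Q := by
  intro Q hQ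
  obtain ⟨p, _, rfl⟩ := Multiset.mem_map.mp hQ
  intro α
  have hpoint : rproj α (ptRect p) = (coordPt α p, coordPt α p) := by
    fin_cases α <;> rfl
  rw [hpoint]
  exact le_trans (spanS_point (hmon α) _) (by omega)

/-- Core step lemma: a merge step in a `d`-wide sequence (`d < r`) keeps all
rectangles small with respect to a `(2r+4)`-grid. -/
lemma core_small {r d : ℕ} (hd : d < r) {P : Finset Pt}
    {thr : Fin 2 → Fin (2*r+4+1) → ℕ} (hmon : ∀ α, Monotone (thr α))
    {pt : Fin 2 → Fin (2*r+4) → Fin (2*r+4) → Pt}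
    (hptP : ∀ α i j, pt α i j ∈ P)
    (hcell1 : ∀ (α : Fin 2) i j, thr α i.castSucc ≤ coordPt α (pt α i j) ∧
        coordPt α (pt α i j) < thr α i.succ)
    (hcell2 : ∀ (α : Fin 2) i j, thr (otherC α) j.castSucc ≤ coordPt (otherC α) (pt α i j) ∧
        coordPt (otherC α) (pt α i j) < thr (otherC α) j.succ)
    {F F' : Fam} (hm : MergeStep F F') (hw : Wide d F')
    (hcov : CoverF P F) (hsml : ∀ Q ∈ F, SmallR thr Q) :
    ∀ B ∈ F', SmallR thr B := by
  obtain ⟨R1, R2, hR1, hR2, rfl⟩ := hm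
  intro B hB
  rcases Multiset.mem_cons.mp hB with hBR | hBG
  swap
  · exact hsml B (Multiset.mem_of_mem_erase (Multiset.mem_of_mem_erase hBG))
  subst hBR
  by_contra hns
  simp only [SmallR, not_forall, not_le] at hns
  obtain ⟨α, hα⟩ := hns
  set R := bbox R1 R2 with hRdef
  set β := otherC α with hβ
  -- three cells met by `R` in coordinate α
  set S := spanS (2*r+4) (thr α) (rproj α R) with hS
  have hSne : S.Nonempty := Finset.card_pos.mp (by omega)
  set i1 := S.min' hSne with hi1
  set i3 := S.max' hSne with hi3
  have hmid_ne : ((S.erase i1).erase i3).Nonempty := by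
    refine Finset.card_pos.mp ?_
    have h1 : S.card - 1 ≤ (S.erase i1).card := Finset.pred_card_le_card_erase
    have h2 : (S.erase i1).card - 1 ≤ ((S.erase i1).erase i3).card :=
      Finset.pred_card_le_card_erase
    omega
  obtain ⟨i2, hi2⟩ := hmid_ne
  have hi2S : i2 ∈ S := Finset.mem_of_mem_erase (Finset.mem_of_mem_erase hi2)
  have hi2ne3 : i2 ≠ i3 := (Finset.mem_erase.mp hi2).1
  have hi2ne1 : i2 ≠ i1 := (Finset.mem_erase.mp (Finset.mem_of_mem_erase hi2)).1
  have h12 : (i1 : ℕ) < (i2 : ℕ) := by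
    have h := S.min'_le i2 hi2S
    rw [Fin.le_def] at h
    rcases lt_or_eq_of_le h with h' | h'
    · exact h'
    · exact absurd (Fin.ext h'.symm) hi2ne1
  have h23 : (i2 : ℕ) < (i3 : ℕ) := by
    have h := S.le_max' i2 hi2S
    rw [Fin.le_def] at h
    rcases lt_or_eq_of_le h with h' | h'
    · exact h'
    · exact absurd (Fin.ext h') hi2ne3
  -- all marked points of the middle cell `i2` have α-coordinate inside `rproj α R`
  have hmid : ∀ j : Fin (2*r+4), (rproj α R).1 ≤ coordPt α (pt α i2 j) ∧
      coordPt α (pt α i2 j) ≤ (rproj α R).2 := by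
    intro j
    have hm1 := mem_spanS.mp (S.min'_mem hSne)
    have hm3 := mem_spanS.mp (S.max'_mem hSne)
    rw [← hi1] at hm1
    rw [← hi3] at hm3
    have hc := hcell1 α i2 j
    have hle1 : thr α i1.succ ≤ thr α i2.castSucc :=
      hmon α (by rw [Fin.le_def]; simp; omega)
    have hle2 : thr α i2.succ ≤ thr α i3.castSucc :=
      hmon α (by rw [Fin.le_def]; simp; omega)
    omega
  -- points in rectangles give span membership in the other coordinate
  have hmemS : ∀ (j : Fin (2*r+4)) (Q : Rect), inRgn (pt α i2 j) Q →
      j ∈ spanS (2*r+4) (thr β) (rproj β Q) := by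
    intro j Q hin
    have h1 := inRgn_coord hin β
    have h2 := hcell2 α i2 j
    rw [← hβ] at h2
    rw [mem_spanS]
    omega
  set S1 := spanS (2*r+4) (thr β) (rproj β R1) with hS1
  set S2 := spanS (2*r+4) (thr β) (rproj β R2) with hS2
  set J := Finset.univ.filter (fun j : Fin (2*r+4) => j ∉ S1 ∧ j ∉ S2) with hJ
  have hJcard : 2*r ≤ J.card := by
    have hsplit := Finset.card_filter_add_card_filter_not
      (s := (Finset.univ : Finset (Fin (2*r+4))))
      (p := fun j => j ∉ S1 ∧ j ∉ S2)
    have hsub : Finset.univ.filter (fun j : Fin (2*r+4) => ¬(j ∉ S1 ∧ j ∉ S2)) ⊆ S1 ∪ S2 := by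
      intro j hj
      simp only [Finset.mem_filter, not_and_or, not_not] at hj
      rcases hj.2 with h | h
      · exact Finset.mem_union_left _ h
      · exact Finset.mem_union_right _ h
    have h14 : (S1 ∪ S2).card ≤ 4 := by
      have hu := Finset.card_union_le S1 S2
      have b1 := hsml R1 hR1 β
      have b2 := hsml R2 (Multiset.mem_of_mem_erase hR2) β
      rw [← hS1] at b1
      rw [← hS2] at b2
      omega
    have hcu : (Finset.univ : Finset (Fin (2*r+4))).card = 2*r+4 := by simp
    have hle := Finset.card_le_card hsub
    rw [← hJ] at hsplit
    omega
  -- for each good row, pick a covering rectangle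
  have hex : ∀ j : Fin (2*r+4), ∃ Q : Rect,
      j ∈ J → Q ∈ ((R ::ₘ ((F.erase R1).erase R2)).erase R) ∧ rviews α R Q ∧
        (spanS (2*r+4) (thr β) (rproj β Q)).card ≤ 2 ∧
        j ∈ spanS (2*r+4) (thr β) (rproj β Q) := by
    intro j
    by_cases hjJ : j ∈ J
    · obtain ⟨Q, hQF, hin⟩ := hcov (pt α i2 j) (hptP α i2 j)
      have hjQ := hmemS j Q hin
      have hjJ' := (Finset.mem_filter.mp hjJ).2
      have hQne1 : Q ≠ R1 := by
        rintro rfl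
        exact hjJ'.1 (by rw [hS1]; exact hjQ)
      have hQne2 : Q ≠ R2 := by
        rintro rfl
        exact hjJ'.2 (by rw [hS2]; exact hjQ)
      refine ⟨Q, fun _ => ⟨?_, ?_, hsml Q hQF β, hjQ⟩⟩
      · rw [Multiset.erase_cons_head]
        exact (Multiset.mem_erase_of_ne hQne2).mpr ((Multiset.mem_erase_of_ne hQne1).mpr hQF)
      · have h1 := inRgn_coord hin α
        have h2 := hmid j
        exact ⟨by omega, by omega⟩
    · exact ⟨R, fun h => absurd h hjJ⟩
  choose g hg using hex
  set V := J.image g with hV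
  -- fibers of g have size ≤ 2
  have hJle : J.card ≤ 2 * V.card := by
    refine Finset.card_le_mul_card_image J 2 (fun Q hQ => ?_)
    obtain ⟨j0, hj0J, hj0⟩ := Finset.mem_image.mp hQ
    have hQ2 : (spanS (2*r+4) (thr β) (rproj β Q)).card ≤ 2 := by
      have h := (hg j0 hj0J).2.2.1
      rwa [hj0] at h
    refine le_trans (Finset.card_le_card ?_) hQ2
    intro j hj
    obtain ⟨hjJ, hjg⟩ := Finset.mem_filter.mp hj
    have h := (hg j hjJ).2.2.2
    rwa [hjg] at h
  -- V injects into the view-filter of R, contradiction with wideness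
  have hVsub : V ⊆ (Multiset.filter (fun Q => rviews α R Q)
      ((R ::ₘ ((F.erase R1).erase R2)).erase R)).toFinset := by
    intro Q hQ
    obtain ⟨j0, hj0J, rfl⟩ := Finset.mem_image.mp hQ
    rw [Multiset.mem_toFinset, Multiset.mem_filter]
    exact ⟨(hg j0 hj0J).1, (hg j0 hj0J).2.1⟩
  have hflt := hw R (Multiset.mem_cons_self _ _) α
  have hc1 := Finset.card_le_card hVsub
  have hc2 := Multiset.toFinset_card_le (Multiset.filter (fun Q => rviews α R Q)
      ((R ::ₘ ((F.erase R1).erase R2)).erase R))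
  omega

/-- Propagation along a decomposition: all families stay covered and small. -/
lemma chain_all {r d : ℕ} (hd : d < r) {P : Finset Pt}
    {thr : Fin 2 → Fin (2*r+4+1) → ℕ} (hmon : ∀ α, Monotone (thr α))
    {pt : Fin 2 → Fin (2*r+4) → Fin (2*r+4) → Pt}
    (hptP : ∀ α i j, pt α i j ∈ P)
    (hcell1 : ∀ (α : Fin 2) i j, thr α i.castSucc ≤ coordPt α (pt α i j) ∧
        coordPt α (pt α i j) < thr α i.succ)
    (hcell2 : ∀ (α : Fin 2) i j, thr (otherC α) j.castSucc ≤ coordPt (otherC α) (pt α i j) ∧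
        coordPt (otherC α) (pt α i j) < thr (otherC α) j.succ) :
    ∀ L : List Fam, List.Chain' MergeStep L → (∀ G ∈ L, Wide d G) →
      ∀ F0, L.head? = some F0 → CoverF P F0 → (∀ Q ∈ F0, SmallR thr Q) →
      ∀ G ∈ L, CoverF P G ∧ (∀ Q ∈ G, SmallR thr Q) := by
  intro L
  induction L with
  | nil => intro _ _ F0 h0; simp at h0
  | cons F L' ih =>
    intro hch hwide F0 h0 hcov hsml G hG
    have hF0 : F = F0 := by simpa using h0
    subst hF0
    rcases List.mem_cons.mp hG with rfl | hG'
    · exact ⟨hcov, hsml⟩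
    · cases L' with
      | nil => simp at hG'
      | cons F1 L'' =>
        have hm : MergeStep F F1 := (List.isChain_cons_cons.mp hch).1
        have hch' := (List.isChain_cons_cons.mp hch).2
        have hw1 : Wide d F1 := hwide F1 (by simp)
        have hcov1 : CoverF P F1 := cover_step hm hcov
        have hsml1 : ∀ Q ∈ F1, SmallR thr Q :=
          core_small hd hmon hptP hcell1 hcell2 hm hw1 hcov hsml
        exact ih hch' (fun G' hG'' => hwide G' (List.mem_cons_of_mem _ hG'')) F1 rfl
          hcov1 hsml1 G hG'

/-- Any nonempty family admits a merge sequence down to a single rectangle,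
with all intermediate families of bounded size. -/
lemma exists_decomp : ∀ (n : ℕ) (F : Fam), Multiset.card F = n + 1 →
    ∃ L : List Fam, L.head? = some F ∧ List.Chain' MergeStep L ∧
      (∃ G, L.getLast? = some G ∧ Multiset.card G = 1) ∧
      ∀ G ∈ L, Multiset.card G ≤ n + 1 := by
  intro n
  induction n with
  | zero =>
    intro F hF
    exact ⟨[F], rfl, List.isChain_singleton F, ⟨F, rfl, hF⟩, by simp [hF]⟩
  | succ n ih =>
    intro F hF
    obtain ⟨R1, hR1⟩ := Multiset.card_pos_iff_exists_mem.mp (show 0 < Multiset.card F by omega)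
    have he1 : Multiset.card (F.erase R1) = n + 1 := by
      rw [Multiset.card_erase_of_mem hR1, hF]; rfl
    obtain ⟨R2, hR2⟩ := Multiset.card_pos_iff_exists_mem.mp (show 0 < Multiset.card (F.erase R1) by omega)
    have hc' : Multiset.card (bbox R1 R2 ::ₘ (F.erase R1).erase R2) = n + 1 := by
      rw [Multiset.card_cons, Multiset.card_erase_of_mem hR2, he1]; rfl
    obtain ⟨L, hhead, hch, hlast, hcards⟩ := ih _ hc'
    refine ⟨F :: L, rfl, ?_, ?_, ?_⟩
    · unfold List.Chain'; rw [List.isChain_cons]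
      refine ⟨fun b hb => ?_, hch⟩
      rw [hhead] at hb
      cases hb
      exact ⟨R1, R2, hR1, hR2, rfl⟩
    · cases L with
      | nil => simp at hhead
      | cons F1 L0 =>
        obtain ⟨G, hG, hGc⟩ := hlast
        exact ⟨G, by rw [List.getLast?_cons_cons]; exact hG, hGc⟩
    · intro G hG
      rcases List.mem_cons.mp hG with rfl | hG'
      · omega
      · have := hcards G hG'
        omega

/-- Every nonempty point set has a decomposition of width at most its cardinality. -/
lemma hasWidth_card (P : Finset Pt) (hne : P.Nonempty) : HasWidthLE P P.card := by
  obtain ⟨n, hn⟩ : ∃ n, P.card = n + 1 := by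
    have := Finset.card_pos.mpr hne
    exact ⟨P.card - 1, by omega⟩
  have hmc : Multiset.card (Multiset.map ptRect P.val) = n + 1 := by
    rw [Multiset.card_map]
    exact hn
  obtain ⟨L, hhead, hch, hlast, hcards⟩ := exists_decomp n _ hmc
  refine ⟨L, ⟨hhead, hch, hlast⟩, ?_⟩
  intro G hG R hR α
  have h1 : Multiset.card (Multiset.filter (fun R' => rviews α R R') (G.erase R)) ≤
      Multiset.card (G.erase R) := Multiset.card_le_card (Multiset.filter_le _ _)
  have h2 : Multiset.card (G.erase R) = Multiset.card G - 1 :=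
    Multiset.card_erase_of_mem hR
  have h3 := hcards G hG
  have h4 : 0 < Multiset.card G := Multiset.card_pos_iff_exists_mem.mpr ⟨R, hR⟩
  omega

/-- a permutation containing a (2r+4)×(2r+4)-grid has width at least r. -/
theorem stmt4 (r : ℕ) (P : Finset Pt) (hP : GenPos P)
    (h : ContainsGrid (2 * r + 4) P) : r ≤ permWidth P := by
  obtain ⟨a, b, hma, hmb, hcells⟩ := h
  choose pt0 hpt0P hx1 hx2 hy1 hy2 using hcells
  have hPne : P.Nonempty := ⟨pt0 ⟨0, by omega⟩ ⟨0, by omega⟩, hpt0P _ _⟩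
  refine le_csInf ⟨P.card, hasWidth_card P hPne⟩ ?_
  intro d hd
  by_contra hlt
  push_neg at hlt
  obtain ⟨L, ⟨hhead, hch, G0, hG0, hG0c⟩, hwide⟩ := hd
  set thr : Fin 2 → Fin (2*r+4+1) → ℕ := fun α => if α = 0 then a else b with hthr
  set pt : Fin 2 → Fin (2*r+4) → Fin (2*r+4) → Pt :=
      fun α i j => if α = 0 then pt0 i j else pt0 j i with hptdef
  have hmon : ∀ α, Monotone (thr α) := by
    intro α
    fin_cases α
    · simpa [hthr] using hma
    · simpa [hthr] using hmb
  have hptP : ∀ α i j, pt α i j ∈ P := by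
    intro α i j
    fin_cases α
    · simpa [hptdef] using hpt0P i j
    · simpa [hptdef] using hpt0P j i
  have hcell1 : ∀ (α : Fin 2) i j, thr α i.castSucc ≤ coordPt α (pt α i j) ∧
      coordPt α (pt α i j) < thr α i.succ := by
    intro α i j
    fin_cases α
    · refine ⟨?_, ?_⟩ <;> simp [hthr, hptdef, coordPt]
      · exact hx1 i j
      · exact hx2 i j
    · refine ⟨?_, ?_⟩ <;> simp [hthr, hptdef, coordPt]
      · exact hy1 j i
      · exact hy2 j i
  have hcell2 : ∀ (α : Fin 2) i j, thr (otherC α) j.castSucc ≤ coordPt (otherC α) (pt α i j) ∧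
      coordPt (otherC α) (pt α i j) < thr (otherC α) j.succ := by
    intro α i j
    fin_cases α
    · refine ⟨?_, ?_⟩ <;> simp [hthr, hptdef, coordPt, otherC]
      · exact hy1 i j
      · exact hy2 i j
    · refine ⟨?_, ?_⟩ <;> simp [hthr, hptdef, coordPt, otherC]
      · exact hx1 j i
      · exact hx2 j i
  have hall := chain_all hlt hmon hptP hcell1 hcell2 L hch hwide _ hhead
    (cover_init P) (small_init hmon P)
  have hG0mem : G0 ∈ L := List.mem_of_getLast? hG0
  obtain ⟨Rl, hRl⟩ := Multiset.card_eq_one.mp hG0c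
  have hcovG := (hall G0 hG0mem).1
  have hsmlG := (hall G0 hG0mem).2
  have hspan : ∀ i : Fin (2*r+4), i ∈ spanS (2*r+4) (thr 0) (rproj 0 Rl) := by
    intro i
    obtain ⟨Q, hQ, hin⟩ := hcovG (pt 0 i i) (hptP 0 i i)
    rw [hRl, Multiset.mem_singleton] at hQ
    subst hQ
    have h1 := inRgn_coord hin 0
    have h2 := hcell1 0 i i
    rw [mem_spanS]
    omega
  have hcard : (2*r+4 : ℕ) ≤ (spanS (2*r+4) (thr 0) (rproj 0 Rl)).card := by
    have hsub : (Finset.univ : Finset (Fin (2*r+4))) ⊆ spanS (2*r+4) (thr 0) (rproj 0 Rl) :=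
      fun i _ => hspan i
    have := Finset.card_le_card hsub
    simpa using this
  have hsm := hsmlG Rl (by rw [hRl]; exact Multiset.mem_singleton_self _) 0
  omega
end

section
/- The canonical r×r-grid permutation has width exactly r. -/
namespace S5

/-! ### Basic objects -/

def pt0 (r i j : ℕ) : Pt := (j * r + (r - i), i * r + (j + 1))

def rowRect (r i c : ℕ) : Rect := ((r - i, c * r + (r - i)), (i * r + 1, i * r + (c + 1)))

def lenA (r k m i : ℕ) : ℕ := if r - m ≤ i then k + 1 else k

def ptsA (r k m : ℕ) : Finset (ℕ × ℕ) :=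
  (Finset.range r ×ˢ Finset.range r).filter (fun ij => lenA r k m ij.1 < ij.2)

def famA (r k m : ℕ) : Fam :=
  Multiset.map (fun i => rowRect r i (lenA r k m i)) (Finset.range r).val +
  Multiset.map (fun ij => ptRect (pt0 r ij.1 ij.2)) (ptsA r k m).val

def bigRect (r m : ℕ) : Rect := ((r - m, r * r), (1, (m + 1) * r))

def famB (r m : ℕ) : Fam :=
  bigRect r m ::ₘ Multiset.map (fun i => rowRect r i (r - 1)) (Finset.Ico (m + 1) r).val

/-! ### Small helpers -/

lemma fin2 (α : Fin 2) : α = 0 ∨ α = 1 := by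
  rcases α with ⟨a, ha⟩
  interval_cases a
  · left; rfl
  · right; rfl

lemma rviews0_iff {R R' : Rect} :
    rviews 0 R R' ↔ (R.1.1 ≤ R'.1.2 ∧ R'.1.1 ≤ R.1.2) := by
  simp [rviews, rproj, ivOverlap]

lemma rviews1_iff {R R' : Rect} :
    rviews 1 R R' ↔ (R.2.1 ≤ R'.2.2 ∧ R'.2.1 ≤ R.2.2) := by
  simp [rviews, rproj, ivOverlap]

lemma rviews_comm {α : Fin 2} {R R' : Rect} : rviews α R R' ↔ rviews α R' R := by
  unfold rviews ivOverlap; tauto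

lemma mulAddInj {r a b c d : ℕ} (hb : b < r) (hd : d < r) (h : a * r + b = c * r + d) :
    a = c ∧ b = d := by
  have hr : 0 < r := Nat.lt_of_le_of_lt (Nat.zero_le b) hb
  have h1 : (b + a * r) / r = a := by
    rw [Nat.add_mul_div_right _ _ hr, Nat.div_eq_of_lt hb, Nat.zero_add]
  have h2 : (d + c * r) / r = c := by
    rw [Nat.add_mul_div_right _ _ hr, Nat.div_eq_of_lt hd, Nat.zero_add]
  have key : b + a * r = d + c * r := by omega
  have hac : a = c := by rw [← h1, ← h2, key]
  exact ⟨hac, by subst hac; omega⟩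

lemma pred_mul {r : ℕ} (hr : 0 < r) : (r - 1) * r + r = r * r := by
  cases r with
  | zero => omega
  | succ n => simp [Nat.succ_sub_one]; ring

lemma ptRect_inj : Function.Injective ptRect := by
  intro p q h
  unfold ptRect at h
  have h1 := congrArg (fun R : Rect => R.1.1) h
  have h2 := congrArg (fun R : Rect => R.2.1) h
  exact Prod.ext h1 h2

lemma pt0_inj {r i j i' j' : ℕ} (hj : j < r) (hj' : j' < r)
    (h : pt0 r i j = pt0 r i' j') : i = i' ∧ j = j' := by
  have h2 : i * r + (j + 1) = i' * r + (j' + 1) := congrArg Prod.snd h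
  have h3 : i * r + j = i' * r + j' := by omega
  exact mulAddInj hj hj' h3

lemma mul_step {c j r : ℕ} (h : c < j) : c * r + r ≤ j * r := by
  calc c * r + r = (c + 1) * r := by ring
    _ ≤ j * r := Nat.mul_le_mul_right r h

lemma le_of_block_le {i c i' r : ℕ} (hc : c < r) (h : i * r + 1 ≤ i' * r + c + 1) : i ≤ i' := by
  by_contra hlt
  push_neg at hlt
  have h3 : i' * r + r ≤ i * r := mul_step hlt
  omega

lemma lenA_spec (r k m i : ℕ) :
    lenA r k m i = k ∧ i < r - m ∨ lenA r k m i = k + 1 ∧ r - m ≤ i := by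
  unfold lenA
  split
  · right; constructor; rfl; assumption
  · left; constructor; rfl; omega

lemma ptx_gt {r i c i' j' : ℕ} (h : c < j' ∨ (c = j' ∧ i' < i)) (hi : i ≤ r) (hi' : i' < r) :
    c * r + (r - i) < j' * r + (r - i') := by
  rcases h with h | ⟨rfl, h⟩
  · have h3 : c * r + r ≤ j' * r := mul_step h
    omega
  · omega

/-! ### No-view lemmas -/

lemma rect_pt_no_view {r k m : ℕ} (α : Fin 2) {i i' j' : ℕ} (hi : i < r) (hi' : i' < r)
    (hj' : j' < r) (hlen : lenA r k m i < r) (hpt : lenA r k m i' < j') :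
    ¬ rviews α (rowRect r i (lenA r k m i)) (ptRect (pt0 r i' j')) := by
  rcases fin2 α with rfl | rfl
  · rw [rviews0_iff]
    rintro ⟨h1, h2⟩
    simp only [rowRect, ptRect, pt0] at h1 h2
    have hdis : lenA r k m i < j' ∨ (lenA r k m i = j' ∧ i' < i) := by
      rcases lenA_spec r k m i with ⟨e1, hc1⟩ | ⟨e1, hc1⟩ <;>
        rcases lenA_spec r k m i' with ⟨e2, hc2⟩ | ⟨e2, hc2⟩ <;>
          rw [e1] <;> rw [e2] at hpt <;> omega
    have hkey : lenA r k m i * r + (r - i) < j' * r + (r - i') :=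
      ptx_gt hdis (le_of_lt hi) hi'
    omega
  · rw [rviews1_iff]
    rintro ⟨h1, h2⟩
    simp only [rowRect, ptRect, pt0] at h1 h2
    have e1 : i ≤ i' := le_of_block_le hj' (by omega)
    have e2 : i' ≤ i := le_of_block_le hlen (by omega)
    have : i = i' := le_antisymm e1 e2
    subst this
    omega

lemma rect_rect_y {r i c i' c' : ℕ} (hc : c < r) (hc' : c' < r) (hne : i ≠ i') :
    ¬ rviews 1 (rowRect r i c) (rowRect r i' c') := by
  rw [rviews1_iff]
  rintro ⟨h1, h2⟩
  simp only [rowRect] at h1 h2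
  exact hne (le_antisymm (le_of_block_le hc' (by omega)) (le_of_block_le hc (by omega)))

lemma pt_pt_no_view (α : Fin 2) {r i j i' j' : ℕ} (hi : i < r) (hi' : i' < r)
    (hj : j < r) (hj' : j' < r) (hne : (i, j) ≠ (i', j')) :
    ¬ rviews α (ptRect (pt0 r i j)) (ptRect (pt0 r i' j')) := by
  rcases fin2 α with rfl | rfl
  · rw [rviews0_iff]
    rintro ⟨h1, h2⟩
    simp only [ptRect, pt0] at h1 h2
    have he : j * r + (r - 1 - i) = j' * r + (r - 1 - i') := by omega
    obtain ⟨e1, e2⟩ := mulAddInj (by omega) (by omega) he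
    exact hne (by simp only [Prod.mk.injEq]; omega)
  · rw [rviews1_iff]
    rintro ⟨h1, h2⟩
    simp only [ptRect, pt0] at h1 h2
    have he : i * r + j = i' * r + j' := by omega
    obtain ⟨e1, e2⟩ := mulAddInj hj hj' he
    exact hne (by simp only [Prod.mk.injEq]; omega)


/-! ### Nodup and membership -/

lemma nodup_rowMap {r : ℕ} (hr : 0 < r) (f : ℕ → ℕ) {s : Multiset ℕ} (hs : s.Nodup) :
    (Multiset.map (fun i => rowRect r i (f i)) s).Nodup := by
  apply Multiset.Nodup.map_on _ hs
  intro x _ y _ hxy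
  have h1 : x * r + 1 = y * r + 1 := congrArg (fun R : Rect => R.2.1) hxy
  have h2 : x * r = y * r := by omega
  exact Nat.eq_of_mul_eq_mul_right hr h2

lemma mem_ptsA {r k m : ℕ} {ij : ℕ × ℕ} :
    ij ∈ ptsA r k m ↔ ij.1 < r ∧ ij.2 < r ∧ lenA r k m ij.1 < ij.2 := by
  unfold ptsA
  rw [Finset.mem_filter, Finset.mem_product, Finset.mem_range, Finset.mem_range]
  tauto

lemma nodup_ptsMap (r k m : ℕ) :
    (Multiset.map (fun ij : ℕ × ℕ => ptRect (pt0 r ij.1 ij.2)) (ptsA r k m).val).Nodup := by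
  apply Multiset.Nodup.map_on _ (ptsA r k m).nodup
  intro x hx y hy hxy
  have hx' := mem_ptsA.1 (Finset.mem_def.2 hx)
  have hy' := mem_ptsA.1 (Finset.mem_def.2 hy)
  have h1 := ptRect_inj hxy
  have h2 := pt0_inj hx'.2.1 hy'.2.1 h1
  exact Prod.ext h2.1 h2.2

/-! ### Wideness of the families -/

lemma wide_famA {r k m : ℕ} (hr : 0 < r) (hlen : ∀ i, i < r → lenA r k m i < r) :
    Wide r (famA r k m) := by
  intro R hR α
  unfold famA at hR ⊢
  set A := Multiset.map (fun i => rowRect r i (lenA r k m i)) (Finset.range r).val with hA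
  set B := Multiset.map (fun ij : ℕ × ℕ => ptRect (pt0 r ij.1 ij.2)) (ptsA r k m).val with hB
  rcases Multiset.mem_add.1 hR with hRA | hRB
  · obtain ⟨i, hiv, rfl⟩ := Multiset.mem_map.1 hRA
    have hi : i < r := by simpa using Finset.mem_def.2 hiv
    rw [Multiset.erase_add_left_pos _ hRA, Multiset.filter_add, Multiset.card_add]
    have hB0 : Multiset.filter (fun R' => rviews α (rowRect r i (lenA r k m i)) R') B = 0 := by
      rw [Multiset.filter_eq_nil]
      intro X hX
      obtain ⟨ij, hij, rfl⟩ := Multiset.mem_map.1 hX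
      obtain ⟨h1, h2, h3⟩ := mem_ptsA.1 (Finset.mem_def.2 hij)
      exact rect_pt_no_view α hi h1 h2 (hlen i hi) h3
    rw [hB0]
    rcases fin2 α with rfl | rfl
    · have hle := Multiset.card_le_card (Multiset.filter_le
        (fun R' => rviews 0 (rowRect r i (lenA r k m i)) R')
        (A.erase (rowRect r i (lenA r k m i))))
      have hcA : Multiset.card A = r := by rw [hA, Multiset.card_map]; exact Finset.card_range r
      have hcE := Multiset.card_erase_of_mem hRA
      rw [Nat.pred_eq_sub_one] at hcE
      simp only [Multiset.card_zero]
      omega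
    · have hA0 : Multiset.filter (fun R' => rviews 1 (rowRect r i (lenA r k m i)) R')
          (A.erase (rowRect r i (lenA r k m i))) = 0 := by
        rw [Multiset.filter_eq_nil]
        intro X hX
        have hndA : A.Nodup := by rw [hA]; exact nodup_rowMap hr _ (Finset.range r).nodup
        obtain ⟨hne, hXA⟩ := (Multiset.Nodup.mem_erase_iff hndA).1 hX
        obtain ⟨i2, hi2v, rfl⟩ := Multiset.mem_map.1 hXA
        have hi2 : i2 < r := by simpa using Finset.mem_def.2 hi2v
        have hne2 : i ≠ i2 := by
          intro h
          exact hne (by rw [h])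
        exact rect_rect_y (hlen i hi) (hlen i2 hi2) hne2
      rw [hA0]
      simpa using hr
  · obtain ⟨ij, hijv, rfl⟩ := Multiset.mem_map.1 hRB
    obtain ⟨h1, h2, h3⟩ := mem_ptsA.1 (Finset.mem_def.2 hijv)
    rw [Multiset.erase_add_right_pos _ hRB, Multiset.filter_add, Multiset.card_add]
    have hA0 : Multiset.filter (fun R' => rviews α (ptRect (pt0 r ij.1 ij.2)) R') A = 0 := by
      rw [Multiset.filter_eq_nil]
      intro X hX
      obtain ⟨i2, hi2v, rfl⟩ := Multiset.mem_map.1 hX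
      have hi2 : i2 < r := by simpa using Finset.mem_def.2 hi2v
      rw [rviews_comm]
      exact rect_pt_no_view α hi2 h1 h2 (hlen i2 hi2) h3
    have hB0 : Multiset.filter (fun R' => rviews α (ptRect (pt0 r ij.1 ij.2)) R')
        (B.erase (ptRect (pt0 r ij.1 ij.2))) = 0 := by
      rw [Multiset.filter_eq_nil]
      intro X hX
      have hndB : B.Nodup := by rw [hB]; exact nodup_ptsMap r k m
      obtain ⟨hne, hXB⟩ := (Multiset.Nodup.mem_erase_iff hndB).1 hX
      obtain ⟨ij2, hij2v, rfl⟩ := Multiset.mem_map.1 hXB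
      obtain ⟨g1, g2, g3⟩ := mem_ptsA.1 (Finset.mem_def.2 hij2v)
      apply pt_pt_no_view α h1 g1 h2 g2
      intro hcon
      have e : ij = ij2 := hcon
      exact hne (by rw [e])
    rw [hA0, hB0]
    simpa using hr

lemma wide_famB {r m : ℕ} (hm : m < r) : Wide r (famB r m) := by
  have hr : 0 < r := by omega
  intro R hR α
  unfold famB at hR ⊢
  set g := fun i => rowRect r i (r - 1) with hg
  set Ms := Multiset.map g (Finset.Ico (m + 1) r).val with hMs
  have hcard : Multiset.card Ms = r - (m + 1) := by
    rw [hMs, Multiset.card_map]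
    exact Nat.card_Ico _ _
  have hy_big : ∀ i', m + 1 ≤ i' → i' < r → ¬ rviews 1 (bigRect r m) (g i') := by
    intro i' ha hb
    rw [rviews1_iff]
    rintro ⟨hh1, hh2⟩
    simp only [bigRect, hg, rowRect] at hh1 hh2
    have h3 : (m + 1) * r ≤ i' * r := Nat.mul_le_mul_right r ha
    omega
  rcases Multiset.mem_cons.1 hR with rfl | hRg
  · rw [Multiset.erase_cons_head]
    rcases fin2 α with rfl | rfl
    · have hle := Multiset.card_le_card (Multiset.filter_le
        (fun R' => rviews 0 (bigRect r m) R') Ms)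
      omega
    · have h0 : Multiset.filter (fun R' => rviews 1 (bigRect r m) R') Ms = 0 := by
        rw [Multiset.filter_eq_nil]
        intro X hX
        obtain ⟨i', hi'v, rfl⟩ := Multiset.mem_map.1 hX
        have hd := Finset.mem_Ico.1 (Finset.mem_def.2 hi'v)
        exact hy_big i' hd.1 hd.2
      rw [h0]
      simpa using hr
  · obtain ⟨i, hiv, rfl⟩ := Multiset.mem_map.1 hRg
    obtain ⟨ha, hb⟩ := Finset.mem_Ico.1 (Finset.mem_def.2 hiv)
    have hne : bigRect r m ≠ g i := by
      intro h
      have hh1 : r * r = (r - 1) * r + (r - i) := congrArg (fun R : Rect => R.1.2) h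
      have hh2 := pred_mul hr
      omega
    rw [Multiset.erase_cons_tail _ hne]
    rcases fin2 α with rfl | rfl
    · have hle := Multiset.card_le_card (Multiset.filter_le
        (fun R' => rviews 0 (g i) R') (bigRect r m ::ₘ Ms.erase (g i)))
      have hcE := Multiset.card_erase_of_mem hRg
      rw [Nat.pred_eq_sub_one] at hcE
      simp only [Multiset.card_cons] at hle
      omega
    · have h0 : Multiset.filter (fun R' => rviews 1 (g i) R')
          (bigRect r m ::ₘ Ms.erase (g i)) = 0 := by
        rw [Multiset.filter_eq_nil]
        intro X hX
        rcases Multiset.mem_cons.1 hX with rfl | hX'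
        · rw [rviews_comm]
          exact hy_big i ha hb
        · have hnd : Ms.Nodup := by rw [hMs]; exact nodup_rowMap hr _ (Finset.Ico _ _).nodup
          obtain ⟨hne2, hXM⟩ := (Multiset.Nodup.mem_erase_iff hnd).1 hX'
          obtain ⟨i2, hi2v, rfl⟩ := Multiset.mem_map.1 hXM
          have hi2 := Finset.mem_Ico.1 (Finset.mem_def.2 hi2v)
          have hne3 : i ≠ i2 := by
            intro h
            exact hne2 (by rw [h])
          exact rect_rect_y (by omega) (by omega) hne3
      rw [h0]
      simpa using hr


/-! ### Merge steps -/

lemma bbox_row_pt (r i c : ℕ) :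
    bbox (rowRect r i c) (ptRect (pt0 r i (c + 1))) = rowRect r i (c + 1) := by
  unfold bbox rowRect ptRect pt0
  have h4 : (c + 1) * r = c * r + r := by ring
  simp only [Prod.mk.injEq, min_def, max_def, true_and, and_true]
  all_goals first
  | (split_ifs <;> omega)
  | omega

lemma famA_roll (r k : ℕ) : famA r k r = famA r (k + 1) 0 := by
  unfold famA
  have hpts : ptsA r k r = ptsA r (k + 1) 0 := by
    ext x
    rw [mem_ptsA, mem_ptsA]
    unfold lenA
    constructor
    · rintro ⟨a1, a2, a3⟩
      refine ⟨a1, a2, ?_⟩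
      split_ifs at a3 ⊢ <;> omega
    · rintro ⟨a1, a2, a3⟩
      refine ⟨a1, a2, ?_⟩
      split_ifs at a3 ⊢ <;> omega
  rw [hpts]
  congr 1
  apply Multiset.map_congr rfl
  intro i hi
  have hir : i < r := by simpa using Finset.mem_def.2 hi
  have hl : lenA r k r i = lenA r (k + 1) 0 i := by
    unfold lenA
    split_ifs <;> omega
  rw [hl]

lemma merge_famA {r k m : ℕ} (hk : k + 1 < r) (hm : m < r) :
    MergeStep (famA r k m) (famA r k (m + 1)) := by
  have hr : 0 < r := by omega
  set i0 := r - 1 - m with hi0def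
  have hi0 : i0 < r := by omega
  have hlen0 : lenA r k m i0 = k := by
    unfold lenA; rw [if_neg]; omega
  have hlen0' : lenA r k (m + 1) i0 = k + 1 := by
    unfold lenA; rw [if_pos]; omega
  have hx : (i0, k + 1) ∈ ptsA r k m := by
    rw [mem_ptsA]
    refine ⟨hi0, hk, ?_⟩
    show lenA r k m i0 < k + 1
    rw [hlen0]
    omega
  obtain ⟨t, ht, hnt⟩ : ∃ t, (Finset.range r).val = i0 ::ₘ t ∧ ∀ i ∈ t, i ≠ i0 := by
    refine ⟨(Finset.range r).val.erase i0, (Multiset.cons_erase (by simpa using hi0)).symm, ?_⟩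
    intro i hi
    exact ((Multiset.Nodup.mem_erase_iff (Finset.range r).nodup).1 hi).1
  have hagree : ∀ i ∈ t, rowRect r i (lenA r k m i) = rowRect r i (lenA r k (m + 1) i) := by
    intro i hiv
    have hne : i ≠ i0 := hnt i hiv
    have hl : lenA r k m i = lenA r k (m + 1) i := by
      unfold lenA
      split_ifs <;> omega
    rw [hl]
  have hpts : ptsA r k (m + 1) = (ptsA r k m).erase (i0, k + 1) := by
    ext x
    rw [Finset.mem_erase, mem_ptsA, mem_ptsA]
    unfold lenA
    constructor
    · rintro ⟨a1, a2, a3⟩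
      constructor
      · intro hcon
        have hx1 : x.1 = i0 := by rw [hcon]
        have hx2 : x.2 = k + 1 := by rw [hcon]
        rw [hx1, hx2, if_pos (show r - (m + 1) ≤ i0 by omega)] at a3
        omega
      · refine ⟨a1, a2, ?_⟩
        split_ifs at a3 ⊢ <;> omega
    · rintro ⟨hneq, a1, a2, a3⟩
      refine ⟨a1, a2, ?_⟩
      have hxor : x.1 ≠ i0 ∨ x.2 ≠ k + 1 := by
        by_contra hcc
        push_neg at hcc
        exact hneq (by rw [← hcc.1, ← hcc.2])
      split_ifs at a3 ⊢ <;> rcases hxor with hxor | hxor <;> omega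
  have hvalpts : (ptsA r k m).val = (i0, k + 1) ::ₘ (ptsA r k (m + 1)).val := by
    rw [hpts, Finset.erase_val]
    exact (Multiset.cons_erase (Finset.mem_def.1 hx)).symm
  have hmemA : rowRect r i0 k ∈
      Multiset.map (fun i => rowRect r i (lenA r k m i)) (Finset.range r).val :=
    Multiset.mem_map.2 ⟨i0, by simpa using hi0,
      show rowRect r i0 (lenA r k m i0) = rowRect r i0 k by rw [hlen0]⟩
  have hmem1 : rowRect r i0 k ∈ famA r k m := by
    unfold famA
    exact Multiset.mem_add.2 (Or.inl hmemA)
  have hmem2 : ptRect (pt0 r i0 (k + 1)) ∈ (famA r k m).erase (rowRect r i0 k) := by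
    unfold famA
    rw [Multiset.erase_add_left_pos _ hmemA]
    apply Multiset.mem_add.2
    right
    exact Multiset.mem_map.2 ⟨(i0, k + 1), Finset.mem_def.1 hx, rfl⟩
  refine ⟨rowRect r i0 k, ptRect (pt0 r i0 (k + 1)), hmem1, hmem2, ?_⟩
  unfold famA
  rw [ht, hvalpts]
  simp only [Multiset.map_cons, Multiset.cons_add]
  rw [hlen0, hlen0', bbox_row_pt]
  rw [Multiset.erase_cons_head]
  rw [Multiset.erase_add_right_pos _ (Multiset.mem_cons_self _ _)]
  rw [Multiset.erase_cons_head]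
  congr 1
  congr 1
  exact Multiset.map_congr rfl (fun i h => (hagree i h).symm)

lemma famA_start (r : ℕ) (hr : 0 < r) : famA r (r - 1) 0 = famB r 0 := by
  unfold famA famB
  have hpts : ptsA r (r - 1) 0 = ∅ := by
    ext x
    rw [mem_ptsA]
    simp only [Finset.notMem_empty, iff_false]
    rintro ⟨a1, a2, a3⟩
    unfold lenA at a3
    split_ifs at a3 <;> omega
  rw [hpts]
  obtain ⟨t, ht, hmemt⟩ : ∃ t, (Finset.range r).val = 0 ::ₘ t ∧ ∀ i ∈ t, 1 ≤ i ∧ i < r := by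
    refine ⟨(Finset.range r).val.erase 0, (Multiset.cons_erase (by simpa using hr)).symm, ?_⟩
    intro i hi
    have h1 := ((Multiset.Nodup.mem_erase_iff (Finset.range r).nodup).1 hi)
    have h2 : i < r := by simpa using h1.2
    omega
  rw [ht]
  simp only [Multiset.map_cons, Finset.empty_val, Multiset.map_zero, add_zero, zero_add]
  have h1 : rowRect r 0 (lenA r (r - 1) 0 0) = bigRect r 0 := by
    have hl : lenA r (r - 1) 0 0 = r - 1 := by
      unfold lenA; rw [if_neg]; omega
    rw [hl]
    unfold rowRect bigRect
    have h2 := pred_mul hr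
    have h30 : r - 0 = r := by omega
    have h31 : 0 * r = 0 := by ring
    have h32 : 1 * r = r := by ring
    have h33 : r - 1 + 1 = r := by omega
    have h34 : (0 + 1) * r = r := by ring
    simp only [Prod.mk.injEq, min_def, max_def, true_and, and_true]
    all_goals first
    | (split_ifs <;> omega)
    | omega
  have hIco : (Finset.Ico 1 r).val = t := by
    have hnd : (0 ::ₘ t).Nodup := by rw [← ht]; exact (Finset.range r).nodup
    have hndt : t.Nodup := (Multiset.nodup_cons.1 hnd).2
    apply Multiset.Nodup.ext (Finset.Ico 1 r).nodup hndt |>.2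
    intro a
    rw [Finset.mem_val, Finset.mem_Ico]
    constructor
    · rintro ⟨a1, a2⟩
      have : a ∈ (Finset.range r).val := by simpa using a2
      rw [ht] at this
      rcases Multiset.mem_cons.1 this with rfl | h
      · omega
      · exact h
    · intro hat
      exact hmemt a hat
  rw [h1, hIco]
  congr 1
  apply Multiset.map_congr rfl
  intro i hi
  have hl : lenA r (r - 1) 0 i = r - 1 := by
    unfold lenA; rw [if_neg]
    have := (hmemt i hi).2
    omega
  rw [hl]

lemma bbox_big {r m : ℕ} (hm : m + 1 < r) :
    bbox (bigRect r m) (rowRect r (m + 1) (r - 1)) = bigRect r (m + 1) := by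
  unfold bbox bigRect rowRect
  have h1 := pred_mul (show 0 < r by omega)
  have h2 : (m + 1 + 1) * r = (m + 1) * r + r := by ring
  have h5 : r - 1 + 1 = r := by omega
  have h7 : r - (m + 1) ≤ r - m := by omega
  have h8 : r - (m + 1) ≤ r := by omega
  simp only [Prod.mk.injEq, min_def, max_def, true_and, and_true]
  all_goals first
  | (split_ifs <;> omega)
  | omega

lemma merge_famB {r m : ℕ} (hm : m + 1 < r) : MergeStep (famB r m) (famB r (m + 1)) := by
  have hval : (Finset.Ico (m + 1) r).val = (m + 1) ::ₘ (Finset.Ico (m + 2) r).val := by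
    have h1 : (Finset.Ico (m + 1) r).erase (m + 1) = Finset.Ico (m + 2) r := by
      rw [Finset.Ico_erase_left]
      exact (Finset.Ico_add_one_left_eq_Ioo (m + 1) r).symm
    rw [← h1, Finset.erase_val]
    exact (Multiset.cons_erase (Finset.mem_def.1 (Finset.mem_Ico.2 ⟨le_refl _, hm⟩))).symm
  refine ⟨bigRect r m, rowRect r (m + 1) (r - 1), Multiset.mem_cons_self _ _, ?_, ?_⟩
  · unfold famB
    rw [Multiset.erase_cons_head, hval]
    exact Multiset.mem_map.2 ⟨m + 1, Multiset.mem_cons_self _ _, rfl⟩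
  · unfold famB
    rw [Multiset.erase_cons_head, hval, Multiset.map_cons, Multiset.erase_cons_head,
      bbox_big hm]

/-! ### Chains of merges -/

def Reaches (d : ℕ) (F G : Fam) : Prop :=
  ∃ L : List Fam, L.head? = some F ∧ L.getLast? = some G ∧
    List.Chain' MergeStep L ∧ ∀ X ∈ L, Wide d X

lemma reaches_single {d : ℕ} {F : Fam} (h : Wide d F) : Reaches d F F := by
  refine ⟨[F], rfl, rfl, List.isChain_singleton F, ?_⟩
  intro X hX
  rw [List.mem_singleton] at hX
  rw [hX]
  exact h

lemma reaches_step {d : ℕ} {F G : Fam} (h1 : Wide d F) (h2 : Wide d G)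
    (h : MergeStep F G) : Reaches d F G := by
  refine ⟨[F, G], rfl, rfl, List.isChain_pair.2 h, ?_⟩
  intro X hX
  simp only [List.mem_cons, List.not_mem_nil, or_false] at hX
  rcases hX with rfl | rfl
  · exact h1
  · exact h2

lemma reaches_trans {d : ℕ} {F G H : Fam} (h1 : Reaches d F G) (h2 : Reaches d G H) :
    Reaches d F H := by
  obtain ⟨L1, ha1, hb1, hc1, hd1⟩ := h1
  obtain ⟨L2, ha2, hb2, hc2, hd2⟩ := h2
  cases L2 with
  | nil => simp at ha2
  | cons G' L2' =>
    have hGG : G' = G := by simpa using ha2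
    subst hGG
    cases L1 with
    | nil => simp at ha1
    | cons F' L1' =>
      refine ⟨(F' :: L1') ++ L2', ?_, ?_, ?_, ?_⟩
      · simpa using ha1
      · cases L2' with
        | nil =>
          have hGH : G' = H := by simpa using hb2
          subst hGH
          simpa using hb1
        | cons X L2'' =>
          rw [List.getLast?_append]
          have h3 : (X :: L2'').getLast? = some H := by
            rw [← List.getLast?_cons_cons (a := G')]
            exact hb2
          rw [h3]
          rfl
      · apply List.isChain_append.2
        refine ⟨hc1, (List.isChain_cons.1 hc2).2, ?_⟩
        intro x hx y hy
        have hxG : G' = x := by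
          rw [hb1] at hx
          simpa using hx
        subst hxG
        exact (List.isChain_cons.1 hc2).1 y hy
      · intro X hX
        rcases List.mem_append.1 hX with hX | hX
        · exact hd1 X hX
        · exact hd2 X (List.mem_cons_of_mem _ hX)

lemma reaches_iter {d : ℕ} (f : ℕ → Fam) (n : ℕ) (h0 : Wide d (f 0))
    (hs : ∀ i, i < n → Reaches d (f i) (f (i + 1))) : Reaches d (f 0) (f n) := by
  induction n with
  | zero => exact reaches_single h0
  | succ n ih =>
    exact reaches_trans (ih (fun i hi => hs i (by omega))) (hs n (by omega))

/-! ### The canonical grid in 0-based coordinates -/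

lemma mem_canonGrid {r : ℕ} {p : Pt} :
    p ∈ canonGrid r ↔ ∃ i, i < r ∧ ∃ j, j < r ∧ p = pt0 r i j := by
  unfold canonGrid
  rw [Finset.mem_image]
  constructor
  · rintro ⟨⟨a, b⟩, hab, rfl⟩
    rw [Finset.mem_product, Finset.mem_Icc, Finset.mem_Icc] at hab
    obtain ⟨⟨ha1, ha2⟩, hb1, hb2⟩ := hab
    refine ⟨a - 1, by omega, b - 1, by omega, ?_⟩
    unfold pt0
    simp only [Prod.mk.injEq]
    have e1 : b - 1 + 1 = b := by omega
    have e2 : r - (a - 1) = r - a + 1 := by omega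
    constructor
    · rw [e2]
    · omega
  · rintro ⟨i, hi, j, hj, rfl⟩
    refine ⟨(i + 1, j + 1), ?_, ?_⟩
    · rw [Finset.mem_product, Finset.mem_Icc, Finset.mem_Icc]
      omega
    · unfold pt0
      have e3 : r - (i + 1) + 1 = r - i := by omega
      simp only [Nat.add_sub_cancel, Prod.mk.injEq, and_true, true_and]
      rw [e3]

lemma rowRect_zero (r i : ℕ) : rowRect r i 0 = ptRect (pt0 r i 0) := by
  unfold rowRect ptRect pt0
  dsimp only
  simp only [Prod.mk.injEq, and_true, true_and]
  all_goals omega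

lemma lenA_zero {r i : ℕ} (hi : i < r) : lenA r 0 0 i = 0 := by
  unfold lenA
  rw [if_neg]
  omega

lemma init_eq {r : ℕ} (hr : 0 < r) :
    Multiset.map ptRect (canonGrid r).val = famA r 0 0 := by
  have h1 : (Multiset.map ptRect (canonGrid r).val).Nodup :=
    Multiset.Nodup.map_on (fun x _ y _ h => ptRect_inj h) (canonGrid r).nodup
  have h2 : (famA r 0 0).Nodup := by
    unfold famA
    rw [Multiset.nodup_add]
    refine ⟨nodup_rowMap hr _ (Finset.range r).nodup, nodup_ptsMap r 0 0, ?_⟩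
    rw [Multiset.disjoint_left]
    intro a haA haB
    obtain ⟨i, hiv, rfl⟩ := Multiset.mem_map.1 haA
    obtain ⟨ij, hijv, hEq⟩ := Multiset.mem_map.1 haB
    obtain ⟨g1, g2, g3⟩ := mem_ptsA.1 (Finset.mem_def.2 hijv)
    have hi : i < r := by simpa using Finset.mem_def.2 hiv
    rw [lenA_zero hi, rowRect_zero] at hEq
    have hinj := pt0_inj g2 hr (ptRect_inj hEq)
    rw [lenA_zero g1] at g3
    omega
  apply (Multiset.Nodup.ext h1 h2).2
  intro a
  constructor
  · intro ha
    obtain ⟨p, hp, rfl⟩ := Multiset.mem_map.1 ha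
    obtain ⟨i, hi, j, hj, rfl⟩ := mem_canonGrid.1 (Finset.mem_def.2 hp)
    unfold famA
    rcases Nat.eq_zero_or_pos j with rfl | hj1
    · apply Multiset.mem_add.2
      left
      apply Multiset.mem_map.2
      exact ⟨i, by simpa using hi, by rw [lenA_zero hi, rowRect_zero]⟩
    · apply Multiset.mem_add.2
      right
      apply Multiset.mem_map.2
      refine ⟨(i, j), Finset.mem_def.1 (mem_ptsA.2 ⟨hi, hj, ?_⟩), rfl⟩
      rw [lenA_zero hi]
      omega
  · intro ha
    unfold famA at ha
    rcases Multiset.mem_add.1 ha with ha | ha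
    · obtain ⟨i, hiv, rfl⟩ := Multiset.mem_map.1 ha
      have hi : i < r := by simpa using Finset.mem_def.2 hiv
      apply Multiset.mem_map.2
      refine ⟨pt0 r i 0, Finset.mem_def.1 (mem_canonGrid.2 ⟨i, hi, 0, hr, rfl⟩), ?_⟩
      rw [lenA_zero hi, rowRect_zero]
    · obtain ⟨ij, hijv, rfl⟩ := Multiset.mem_map.1 ha
      obtain ⟨g1, g2, g3⟩ := mem_ptsA.1 (Finset.mem_def.2 hijv)
      apply Multiset.mem_map.2
      exact ⟨pt0 r ij.1 ij.2, Finset.mem_def.1 (mem_canonGrid.2 ⟨ij.1, g1, ij.2, g2, rfl⟩), rfl⟩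

/-! ### The upper bound -/

lemma upper {r : ℕ} (hr : 0 < r) : HasWidthLE (canonGrid r) r := by
  have hstageA : ∀ k, k < r - 1 → Reaches r (famA r k 0) (famA r (k + 1) 0) := by
    intro k hk
    have h := reaches_iter (fun m => famA r k m) r
      (wide_famA hr (by intro i hi; unfold lenA; split_ifs <;> omega))
      (fun m hm => reaches_step
        (wide_famA hr (by intro i hi; unfold lenA; split_ifs <;> omega))
        (wide_famA hr (by intro i hi; unfold lenA; split_ifs <;> omega))
        (merge_famA (by omega) hm))
    have h2 : Reaches r (famA r k 0) (famA r k r) := h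
    rwa [famA_roll] at h2
  have hA : Reaches r (famA r 0 0) (famA r (r - 1) 0) :=
    reaches_iter (fun k => famA r k 0) (r - 1)
      (wide_famA hr (by intro i hi; unfold lenA; split_ifs <;> omega))
      (fun k hk => hstageA k hk)
  have hB : Reaches r (famB r 0) (famB r (r - 1)) :=
    reaches_iter (fun m => famB r m) (r - 1)
      (wide_famB hr)
      (fun m hm => reaches_step (wide_famB (by omega)) (wide_famB (by omega))
        (merge_famB (by omega)))
  rw [famA_start r hr] at hA
  have hAB := reaches_trans hA hB
  obtain ⟨L, ha, hb, hc, hd⟩ := hAB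
  refine ⟨L, ⟨?_, hc, ⟨famB r (r - 1), hb, ?_⟩⟩, hd⟩
  · rw [ha, init_eq hr]
  · unfold famB
    rw [show Finset.Ico (r - 1 + 1) r = ∅ from by
      rw [(by omega : r - 1 + 1 = r)]; exact Finset.Ico_self r]
    simp

/-! ### Lower bound -/

lemma keyZ {r a b : ℤ} (h : ¬(a = 0 ∧ b = 0)) : r ≤ |a * r - b| ∨ r ≤ |b * r + a| := by
  set M := max |a * r - b| |b * r + a| with hM
  have hM0 : (0:ℤ) ≤ M := le_trans (abs_nonneg _) (le_max_left _ _)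
  have h1 : |a * r - b| ≤ M := le_max_left _ _
  have h2 : |b * r + a| ≤ M := le_max_right _ _
  have ha2 : |a| ≤ a ^ 2 := by nlinarith [sq_nonneg (|a| - 1), sq_abs a, abs_nonneg a]
  have hb2 : |b| ≤ b ^ 2 := by nlinarith [sq_nonneg (|b| - 1), sq_abs b, abs_nonneg b]
  have i1 : a * (a * r - b) ≤ |a| * M :=
    le_trans (le_abs_self _)
      (by rw [abs_mul]; exact mul_le_mul_of_nonneg_left h1 (abs_nonneg a))
  have i2 : b * (b * r + a) ≤ |b| * M :=
    le_trans (le_abs_self _)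
      (by rw [abs_mul]; exact mul_le_mul_of_nonneg_left h2 (abs_nonneg b))
  have key : (a ^ 2 + b ^ 2) * r ≤ (a ^ 2 + b ^ 2) * M := by
    have e2 : (|a| + |b|) * M ≤ (a ^ 2 + b ^ 2) * M :=
      mul_le_mul_of_nonneg_right (by linarith) hM0
    calc (a ^ 2 + b ^ 2) * r = a * (a * r - b) + b * (b * r + a) := by ring
      _ ≤ |a| * M + |b| * M := add_le_add i1 i2
      _ = (|a| + |b|) * M := by ring
      _ ≤ (a ^ 2 + b ^ 2) * M := e2
  have hpos : (0:ℤ) < a ^ 2 + b ^ 2 := by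
    rcases not_and_or.mp h with ha | hb
    · have := mul_self_pos.2 ha
      nlinarith [sq_nonneg b]
    · have := mul_self_pos.2 hb
      nlinarith [sq_nonneg a]
  have hrM : r ≤ M := le_of_mul_le_mul_left key hpos
  exact le_max_iff.mp (hM ▸ hrM)

lemma coordPt0 (p : Pt) : coordPt 0 p = p.1 := rfl

lemma coordPt1 (p : Pt) : coordPt 1 p = p.2 := rfl

lemma rproj_ptRect (α : Fin 2) (p : Pt) :
    rproj α (ptRect p) = (coordPt α p, coordPt α p) := by
  rcases fin2 α with rfl | rfl <;> rfl

lemma rproj_bbox (α : Fin 2) (p q : Pt) :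
    rproj α (bbox (ptRect p) (ptRect q)) =
      (min (coordPt α p) (coordPt α q), max (coordPt α p) (coordPt α q)) := by
  rcases fin2 α with rfl | rfl <;> rfl

def invPt (r : ℕ) (α : Fin 2) (n : ℕ) : Pt :=
  if α = 0 then pt0 r (r - 1 - (n - 1) % r) ((n - 1) / r)
  else pt0 r ((n - 1) / r) ((n - 1) % r)

lemma invPt_coord {r : ℕ} (hr : 0 < r) (α : Fin 2) {n : ℕ} (hn : 1 ≤ n) :
    coordPt α (invPt r α n) = n := by
  have h1 : (n - 1) / r * r + (n - 1) % r = n - 1 := by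
    rw [Nat.mul_comm]
    exact Nat.div_add_mod _ _
  have h2 : (n - 1) % r < r := Nat.mod_lt _ hr
  rcases fin2 α with rfl | rfl
  · show coordPt 0 (pt0 r (r - 1 - (n - 1) % r) ((n - 1) / r)) = n
    rw [coordPt0]
    unfold pt0
    dsimp only
    have h3 : r - (r - 1 - (n - 1) % r) = (n - 1) % r + 1 := by omega
    omega
  · show coordPt 1 (pt0 r ((n - 1) / r) ((n - 1) % r)) = n
    rw [coordPt1]
    unfold pt0
    dsimp only
    omega

lemma invPt_mem {r : ℕ} (hr : 0 < r) (α : Fin 2) {n : ℕ} (hn1 : 1 ≤ n) (hn2 : n ≤ r * r) :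
    invPt r α n ∈ canonGrid r := by
  rw [mem_canonGrid]
  have hq : (n - 1) / r < r := Nat.div_lt_of_lt_mul (by omega)
  have h2 : (n - 1) % r < r := Nat.mod_lt _ hr
  rcases fin2 α with rfl | rfl
  · exact ⟨r - 1 - (n - 1) % r, by omega, (n - 1) / r, hq, rfl⟩
  · exact ⟨(n - 1) / r, hq, (n - 1) % r, h2, rfl⟩

lemma coord_bounds {r : ℕ} (hr : 0 < r) (α : Fin 2) {p : Pt} (hp : p ∈ canonGrid r) :
    1 ≤ coordPt α p ∧ coordPt α p ≤ r * r := by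
  obtain ⟨i, hi, j, hj, rfl⟩ := mem_canonGrid.1 hp
  have h1 := pred_mul hr
  have h2 : j * r ≤ (r - 1) * r := Nat.mul_le_mul_right r (by omega)
  have h3 : i * r ≤ (r - 1) * r := Nat.mul_le_mul_right r (by omega)
  have h4 : 1 ≤ r - i := by omega
  have h5 : r - i ≤ r := by omega
  rcases fin2 α with rfl | rfl
  · rw [coordPt0]
    unfold pt0
    dsimp only
    constructor <;> omega
  · rw [coordPt1]
    unfold pt0
    dsimp only
    constructor <;> omega

lemma lower {r d : ℕ} (hr : 0 < r) (hd : d < r) : ¬ HasWidthLE (canonGrid r) d := by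
  rintro ⟨L, ⟨hhead, hchain, F, hlast, hcard⟩, hwide⟩
  have hndF0 : (Multiset.map ptRect (canonGrid r).val).Nodup :=
    Multiset.Nodup.map_on (fun x _ y _ h => ptRect_inj h) (canonGrid r).nodup
  cases L with
  | nil => simp at hhead
  | cons G0 L' =>
    have hG0 : G0 = Multiset.map ptRect (canonGrid r).val := by simpa using hhead
    subst hG0
    cases L' with
    | nil =>
      have hF : Multiset.map ptRect (canonGrid r).val = F := by simpa using hlast
      subst hF
      obtain ⟨R, hR⟩ := Multiset.card_eq_one.1 hcard
      have hd1 : 0 < d := by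
        have hw := hwide (Multiset.map ptRect (canonGrid r).val) (by simp) R
          (by rw [hR]; exact Multiset.mem_singleton_self _) 0
        omega
      have hp1 : ptRect (pt0 r 0 0) ∈ Multiset.map ptRect (canonGrid r).val :=
        Multiset.mem_map_of_mem _
          (Finset.mem_def.1 (mem_canonGrid.2 ⟨0, by omega, 0, by omega, rfl⟩))
      have hp2 : ptRect (pt0 r 0 1) ∈ Multiset.map ptRect (canonGrid r).val :=
        Multiset.mem_map_of_mem _
          (Finset.mem_def.1 (mem_canonGrid.2 ⟨0, by omega, 1, by omega, rfl⟩))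
      rw [hR] at hp1 hp2
      have e1 := Multiset.mem_singleton.1 hp1
      have e2 := Multiset.mem_singleton.1 hp2
      have e3 : pt0 r 0 0 = pt0 r 0 1 := ptRect_inj (e1.trans e2.symm)
      have e4 : 0 * r + (0 + 1) = 0 * r + (1 + 1) := congrArg Prod.snd e3
      omega
    | cons F1 L'' =>
      have hms : MergeStep (Multiset.map ptRect (canonGrid r).val) F1 :=
        (List.isChain_cons.1 hchain).1 F1 rfl
      have hwF1 : Wide d F1 := hwide F1 (by simp)
      obtain ⟨R1, R2, hR1, hR2, hF1⟩ := hms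
      obtain ⟨p, hp, rfl⟩ := Multiset.mem_map.1 hR1
      have hR2' := Multiset.mem_of_mem_erase hR2
      obtain ⟨q, hq, rfl⟩ := Multiset.mem_map.1 hR2'
      have hne : ptRect q ≠ ptRect p := ((Multiset.Nodup.mem_erase_iff hndF0).1 hR2).1
      have hpq : q ≠ p := fun h => hne (by rw [h])
      obtain ⟨i1, hi1, j1, hj1, rfl⟩ := mem_canonGrid.1 (Finset.mem_def.2 hp)
      obtain ⟨i2, hi2, j2, hj2, rfl⟩ := mem_canonGrid.1 (Finset.mem_def.2 hq)
      have cast_x : ∀ i j : ℕ, i < r → (coordPt 0 (pt0 r i j) : ℤ) = j * r + r - i := by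
        intro i j hi
        rw [coordPt0]
        unfold pt0
        dsimp only
        push_cast [Nat.cast_sub (le_of_lt hi)]
        ring
      have cast_y : ∀ i j : ℕ, (coordPt 1 (pt0 r i j) : ℤ) = i * r + j + 1 := by
        intro i j
        rw [coordPt1]
        unfold pt0
        dsimp only
        push_cast
        ring
      have hkey : ∃ α : Fin 2,
          min (coordPt α (pt0 r i1 j1)) (coordPt α (pt0 r i2 j2)) + r
            ≤ max (coordPt α (pt0 r i1 j1)) (coordPt α (pt0 r i2 j2)) := by
        have hz := keyZ (r := (r:ℤ)) (a := (j2:ℤ) - j1) (b := (i2:ℤ) - i1)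
          (by
            rintro ⟨hA, hB⟩
            apply hpq
            have hii : i2 = i1 := by omega
            have hjj : j2 = j1 := by omega
            rw [hii, hjj])
        rcases hz with hz | hz
        · refine ⟨0, ?_⟩
          have e1 := cast_x i1 j1 hi1
          have e2 := cast_x i2 j2 hi2
          have habs : ((j2:ℤ) - j1) * r - ((i2:ℤ) - i1)
              = (coordPt 0 (pt0 r i2 j2) : ℤ) - coordPt 0 (pt0 r i1 j1) := by
            rw [e1, e2]; ring
          rw [habs] at hz
          rcases le_abs.mp hz with h | h <;> omega
        · refine ⟨1, ?_⟩
          have e1 := cast_y i1 j1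
          have e2 := cast_y i2 j2
          have habs : ((i2:ℤ) - i1) * r + ((j2:ℤ) - j1)
              = (coordPt 1 (pt0 r i2 j2) : ℤ) - coordPt 1 (pt0 r i1 j1) := by
            rw [e1, e2]; ring
          rw [habs] at hz
          rcases le_abs.mp hz with h | h <;> omega
      obtain ⟨α, hα⟩ := hkey
      have hbnd1 := coord_bounds hr α (Finset.mem_def.2 hp)
      have hbnd2 := coord_bounds hr α (Finset.mem_def.2 hq)
      have hBmem : bbox (ptRect (pt0 r i1 j1)) (ptRect (pt0 r i2 j2)) ∈ F1 := by
        rw [hF1]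
        exact Multiset.mem_cons_self _ _
      have hcnt := hwF1 _ hBmem α
      rw [hF1, Multiset.erase_cons_head] at hcnt
      have hmap1 : (Multiset.map ptRect (canonGrid r).val).erase (ptRect (pt0 r i1 j1))
          = Multiset.map ptRect ((canonGrid r).val.erase (pt0 r i1 j1)) :=
        (Multiset.map_erase ptRect ptRect_inj _ _).symm
      have hmap2 : (Multiset.map ptRect ((canonGrid r).val.erase (pt0 r i1 j1))).erase
            (ptRect (pt0 r i2 j2))
          = Multiset.map ptRect (((canonGrid r).val.erase (pt0 r i1 j1)).erase (pt0 r i2 j2)) :=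
        (Multiset.map_erase ptRect ptRect_inj _ _).symm
      rw [hmap1, hmap2] at hcnt
      have hfc : Multiset.card (Multiset.filter
            (fun R' => rviews α (bbox (ptRect (pt0 r i1 j1)) (ptRect (pt0 r i2 j2))) R')
            (Multiset.map ptRect (((canonGrid r).val.erase (pt0 r i1 j1)).erase (pt0 r i2 j2))))
          = Multiset.card (Multiset.filter
            (fun x => rviews α (bbox (ptRect (pt0 r i1 j1)) (ptRect (pt0 r i2 j2))) (ptRect x))
            (((canonGrid r).val.erase (pt0 r i1 j1)).erase (pt0 r i2 j2))) := by
        rw [← Multiset.countP_eq_card_filter, Multiset.countP_map,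
          ← Multiset.countP_eq_card_filter]
      rw [hfc] at hcnt
      have hnds : ((((canonGrid r).val.erase (pt0 r i1 j1)).erase (pt0 r i2 j2))).Nodup :=
        (((canonGrid r).nodup.erase _).erase _)
      set T : Finset Pt := ⟨((canonGrid r).val.erase (pt0 r i1 j1)).erase (pt0 r i2 j2), hnds⟩
        with hT
      have hTcard : Multiset.card (Multiset.filter
            (fun x => rviews α (bbox (ptRect (pt0 r i1 j1)) (ptRect (pt0 r i2 j2))) (ptRect x))
            (((canonGrid r).val.erase (pt0 r i1 j1)).erase (pt0 r i2 j2)))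
          = (T.filter
            (fun x => rviews α (bbox (ptRect (pt0 r i1 j1)) (ptRect (pt0 r i2 j2))) (ptRect x))).card
        := rfl
      rw [hTcard] at hcnt
      have hinj : (Finset.Ico
            (min (coordPt α (pt0 r i1 j1)) (coordPt α (pt0 r i2 j2)) + 1)
            (max (coordPt α (pt0 r i1 j1)) (coordPt α (pt0 r i2 j2)))).card
          ≤ (T.filter
            (fun x => rviews α (bbox (ptRect (pt0 r i1 j1)) (ptRect (pt0 r i2 j2))) (ptRect x))).card := by
        apply Finset.card_le_card_of_injOn (fun n => invPt r α n)
        · intro n hn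
          rw [Finset.mem_coe, Finset.mem_Ico] at hn
          have hn1 : 1 ≤ n := by omega
          have hn2 : n ≤ r * r := by omega
          have hmem := invPt_mem hr α hn1 hn2
          have hcoord := invPt_coord hr α (n := n) hn1
          rw [Finset.mem_coe, Finset.mem_filter]
          constructor
          · show invPt r α n ∈ T
            rw [hT]
            rw [Finset.mem_mk]
            rw [Multiset.mem_erase_of_ne, Multiset.mem_erase_of_ne]
            · exact Finset.mem_def.1 hmem
            · intro hcon
              rw [hcon] at hcoord
              omega
            · intro hcon
              rw [hcon] at hcoord
              omega
          · show rviews α _ _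
            unfold rviews
            rw [rproj_bbox, rproj_ptRect, hcoord]
            exact ⟨by omega, by omega⟩
        · intro x hx y hy hxy
          rw [Finset.mem_coe, Finset.mem_Ico] at hx hy
          have cx := invPt_coord hr α (n := x) (by omega)
          have cy := invPt_coord hr α (n := y) (by omega)
          rw [← cx, ← cy]
          exact congrArg (coordPt α) hxy
      rw [Nat.card_Ico] at hinj
      omega
end S5

/-- the canonical r×r-grid permutation has width exactly r. -/
theorem stmt5 (r : ℕ) : permWidth (canonGrid r) = r := by
  unfold permWidth
  rcases Nat.eq_zero_or_pos r with rfl | hr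
  · have hempty : {d | HasWidthLE (canonGrid 0) d} = ∅ := by
      ext d
      simp only [Set.mem_setOf_eq, Set.mem_empty_iff_false, iff_false]
      rintro ⟨L, ⟨hhead, hchain, F, hlast, hcard⟩, _⟩
      have hg : (canonGrid 0).val = 0 := by
        have hg0 : canonGrid 0 = ∅ := by
          apply Finset.eq_empty_of_forall_notMem
          intro p hp
          obtain ⟨i, hi, _⟩ := S5.mem_canonGrid.1 hp
          omega
        rw [hg0]
        rfl
      cases L with
      | nil => simp at hhead
      | cons G0 L' =>
        have hG0 : G0 = 0 := by
          have h := hhead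
          rw [hg] at h
          simpa using h
        subst hG0
        cases L' with
        | nil =>
          have hF : (0 : Fam) = F := by simpa using hlast
          rw [← hF] at hcard
          simp at hcard
        | cons F1 L'' =>
          have hms : MergeStep 0 F1 := (List.isChain_cons.1 hchain).1 F1 rfl
          obtain ⟨R1, R2, hR1, _, _⟩ := hms
          exact absurd hR1 (Multiset.notMem_zero _)
    rw [hempty, Nat.sInf_empty]
  · have hup := S5.upper hr
    have hne : {d | HasWidthLE (canonGrid r) d}.Nonempty := ⟨r, hup⟩
    have hmem := Nat.sInf_mem hne
    have hle : sInf {d | HasWidthLE (canonGrid r) d} ≤ r := Nat.sInf_le hup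
    by_contra hcon
    have hlt : sInf {d | HasWidthLE (canonGrid r) d} < r := lt_of_le_of_ne hle hcon
    exact S5.lower hr hlt hmem
end

section
/- The canonical r×r-grid permutation has no (r−1)-close pair: for any two distinct points p = p_{i,j} and p' = p_{i',j'}, either at least r−1 other points lie strictly between them in the x-coordinate, or at least r−1 other points lie strictly between them in the y-coordinate. -/
lemma uniq {r c c' u u' : ℕ} (hu : 1 ≤ u) (hur : u ≤ r) (hu' : 1 ≤ u') (hur' : u' ≤ r)
    (h : c * r + u = c' * r + u') : c = c' ∧ u = u' := by
  rcases lt_trichotomy c c' with h1 | h1 | h1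
  · exfalso
    have h2 : (c + 1) * r ≤ c' * r := mul_le_mul_left (by omega) r
    have h3 : (c + 1) * r = c * r + r := by ring
    omega
  · subst h1
    omega
  · exfalso
    have h2 : (c' + 1) * r ≤ c * r := mul_le_mul_left (by omega) r
    have h3 : (c' + 1) * r = c' * r + r := by ring
    omega

lemma mem_canonGrid {r : ℕ} {p : Pt} :
    p ∈ canonGrid r ↔ ∃ i j : ℕ, 1 ≤ i ∧ i ≤ r ∧ 1 ≤ j ∧ j ≤ r ∧
      p = ((j - 1) * r + (r - i + 1), (i - 1) * r + j) := by
  simp only [canonGrid, Finset.mem_image, Finset.mem_product, Finset.mem_Icc, Prod.exists]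
  constructor
  · rintro ⟨i, j, ⟨⟨h1, h2⟩, h3, h4⟩, rfl⟩
    exact ⟨i, j, h1, h2, h3, h4, rfl⟩
  · rintro ⟨i, j, h1, h2, h3, h4, rfl⟩
    exact ⟨i, j, ⟨⟨h1, h2⟩, h3, h4⟩, rfl⟩

lemma injOn_coord (r : ℕ) (α : Fin 2) :
    Set.InjOn (coordPt α) (canonGrid r : Set Pt) := by
  intro p hp p' hp' h
  rw [Finset.mem_coe, mem_canonGrid] at hp hp'
  obtain ⟨i, j, h1, h2, h3, h4, rfl⟩ := hp
  obtain ⟨i', j', h1', h2', h3', h4', rfl⟩ := hp'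
  fin_cases α <;> simp only [coordPt, Fin.isValue, if_true, if_false] at h
  · have := uniq (c := j - 1) (c' := j' - 1) (u := r - i + 1) (u' := r - i' + 1)
      (by omega) (by omega) (by omega) (by omega) h
    have : i = i' ∧ j = j' := by omega
    simp [this.1, this.2]
  · simp only [show (⟨1,by norm_num⟩ : Fin 2) ≠ 0 by decide, if_false] at h
    have := uniq (c := i - 1) (c' := i' - 1) (u := j) (u' := j') h3 h4 h3' h4' h
    have : i = i' ∧ j = j' := by omega
    simp [this.1, this.2]

lemma card_canonGrid (r : ℕ) : (canonGrid r).card = r * r := by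
  rw [canonGrid, Finset.card_image_of_injOn, Finset.card_product, Nat.card_Icc]
  · have : r + 1 - 1 = r := by omega
    rw [this]
  · intro ij hij ij' hij' h
    simp only [Finset.coe_product, Set.mem_prod, Finset.mem_coe, Finset.mem_Icc] at hij hij'
    have h1 := congrArg Prod.fst h
    simp only at h1
    have := uniq (c := ij.2 - 1) (c' := ij'.2 - 1) (u := r - ij.1 + 1) (u' := r - ij'.1 + 1)
      (by omega) (by omega) (by omega) (by omega) h1
    have : ij.1 = ij'.1 ∧ ij.2 = ij'.2 := by omega
    exact Prod.ext this.1 this.2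

lemma image_coord (r : ℕ) (α : Fin 2) :
    (canonGrid r).image (coordPt α) = Finset.Icc 1 (r * r) := by
  apply Finset.eq_of_subset_of_card_le
  · intro v hv
    simp only [Finset.mem_image] at hv
    obtain ⟨p, hp, rfl⟩ := hv
    rw [mem_canonGrid] at hp
    obtain ⟨i, j, h1, h2, h3, h4, rfl⟩ := hp
    have hj : (j - 1) * r ≤ (r - 1) * r := mul_le_mul_left (by omega) r
    have hi : (i - 1) * r ≤ (r - 1) * r := mul_le_mul_left (by omega) r
    have hr : (r - 1) * r + r = r * r := by
      cases r with
      | zero => rfl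
      | succ n => simp only [Nat.add_sub_cancel]; ring
    have hX1 : 1 ≤ (j - 1) * r + (r - i + 1) := by omega
    have hX2 : (j - 1) * r + (r - i + 1) ≤ r * r := by omega
    have hY1 : 1 ≤ (i - 1) * r + j := by omega
    have hY2 : (i - 1) * r + j ≤ r * r := by omega
    fin_cases α <;> simp only [coordPt, Finset.mem_Icc] <;> norm_num <;> omega
  · rw [Nat.card_Icc, Finset.card_image_of_injOn (injOn_coord r α), card_canonGrid]
    omega

lemma coord_mem {r : ℕ} {p : Pt} (hp : p ∈ canonGrid r) (α : Fin 2) :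
    1 ≤ coordPt α p ∧ coordPt α p ≤ r * r := by
  have : coordPt α p ∈ Finset.Icc 1 (r * r) := by
    rw [← image_coord r α]; exact Finset.mem_image_of_mem _ hp
  simpa using this

lemma count_ge {r : ℕ} {p p' : Pt} (hp : p ∈ canonGrid r) (hp' : p' ∈ canonGrid r)
    (α : Fin 2) (h : min (coordPt α p) (coordPt α p') + r ≤ max (coordPt α p) (coordPt α p')) :
    r - 1 ≤ ((canonGrid r).filter (Between α p p')).card := by
  set mn := min (coordPt α p) (coordPt α p') with hmn
  set mx := max (coordPt α p) (coordPt α p') with hmx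
  have key : (Finset.Ioo mn mx).card ≤ ((canonGrid r).filter (Between α p p')).card := by
    apply Finset.card_le_card_of_surjOn (coordPt α)
    intro v hv
    simp only [Finset.coe_Ioo, Set.mem_Ioo] at hv
    have hb := coord_mem hp α
    have hb' := coord_mem hp' α
    have hv1 : v ∈ Finset.Icc 1 (r * r) := by
      simp only [Finset.mem_Icc]
      constructor
      · have : 1 ≤ mn := by rw [hmn]; exact le_min hb.1 hb'.1
        omega
      · have : mx ≤ r * r := by rw [hmx]; exact max_le hb.2 hb'.2
        omega
    rw [← image_coord r α] at hv1
    obtain ⟨q, hq, hqv⟩ := Finset.mem_image.mp hv1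
    refine ⟨q, ?_, hqv⟩
    simp only [Finset.coe_filter, Set.mem_setOf_eq]
    exact ⟨hq, by rw [Between, hqv]; exact ⟨hv.1, hv.2⟩⟩
  rw [Nat.card_Ioo] at key
  omega

lemma step_mul {a r : ℕ} (ha : 1 ≤ a) : (a - 1) * r + r = a * r := by
  have h : a - 1 + 1 = a := by omega
  calc (a - 1) * r + r = (a - 1 + 1) * r := by ring
  _ = a * r := by rw [h]

lemma arith_half {r i j i' j' : ℕ} (hi : 1 ≤ i) (hi2 : i ≤ r) (hj : 1 ≤ j) (hj2 : j ≤ r)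
    (hi' : 1 ≤ i') (hi2' : i' ≤ r) (hj' : 1 ≤ j') (hj2' : j' ≤ r)
    (hjj : j ≤ j') (hne : ¬(i = i' ∧ j = j')) :
    (j - 1) * r + (r - i + 1) + r ≤ (j' - 1) * r + (r - i' + 1) ∨
    (j' - 1) * r + (r - i' + 1) + r ≤ (j - 1) * r + (r - i + 1) ∨
    (i - 1) * r + j + r ≤ (i' - 1) * r + j' ∨
    (i' - 1) * r + j' + r ≤ (i - 1) * r + j := by
  rcases lt_or_ge i i' with h | h
  · right; right; left
    have e1 := step_mul (a := i) (r := r) hi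
    have e2 : i * r ≤ (i' - 1) * r := mul_le_mul_left (by omega) r
    omega
  · rcases eq_or_lt_of_le hjj with rfl | hlt
    · have hii : i' < i := by omega
      right; right; right
      have e1 := step_mul (a := i') (r := r) hi'
      have e2 : i' * r ≤ (i - 1) * r := mul_le_mul_left (by omega) r
      omega
    · left
      have e1 := step_mul (a := j) (r := r) hj
      have e2 : j * r ≤ (j' - 1) * r := mul_le_mul_left (by omega) r
      omega

/-- the canonical r×r-grid permutation has no (r−1)-close pair. -/
theorem stmt6 (r : ℕ) :
    ∀ p ∈ canonGrid r, ∀ p' ∈ canonGrid r, p ≠ p' →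
      r - 1 ≤ ((canonGrid r).filter (Between 0 p p')).card ∨
      r - 1 ≤ ((canonGrid r).filter (Between 1 p p')).card := by
  intro p hp p' hp' hne
  obtain ⟨i, j, hi, hi2, hj, hj2, hpe⟩ := mem_canonGrid.mp hp
  obtain ⟨i', j', hi', hi2', hj', hj2', hpe'⟩ := mem_canonGrid.mp hp'
  have hne' : ¬(i = i' ∧ j = j') := by
    rintro ⟨rfl, rfl⟩
    exact hne (hpe.trans hpe'.symm)
  have D : (j - 1) * r + (r - i + 1) + r ≤ (j' - 1) * r + (r - i' + 1) ∨
      (j' - 1) * r + (r - i' + 1) + r ≤ (j - 1) * r + (r - i + 1) ∨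
      (i - 1) * r + j + r ≤ (i' - 1) * r + j' ∨
      (i' - 1) * r + j' + r ≤ (i - 1) * r + j := by
    rcases le_total j j' with h | h
    · exact arith_half hi hi2 hj hj2 hi' hi2' hj' hj2' h hne'
    · have := arith_half hi' hi2' hj' hj2' hi hi2 hj hj2 h
        (by rintro ⟨rfl, rfl⟩; exact hne' ⟨rfl, rfl⟩)
      tauto
  have c0p : coordPt 0 p = (j - 1) * r + (r - i + 1) := by rw [hpe]; rfl
  have c0p' : coordPt 0 p' = (j' - 1) * r + (r - i' + 1) := by rw [hpe']; rfl
  have c1p : coordPt 1 p = (i - 1) * r + j := by rw [hpe]; rfl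
  have c1p' : coordPt 1 p' = (i' - 1) * r + j' := by rw [hpe']; rfl
  rcases D with h | h | h | h
  · left
    apply count_ge hp hp' 0
    rw [c0p, c0p']
    have h1 := min_le_left ((j - 1) * r + (r - i + 1)) ((j' - 1) * r + (r - i' + 1))
    have h2 := le_max_right ((j - 1) * r + (r - i + 1)) ((j' - 1) * r + (r - i' + 1))
    omega
  · left
    apply count_ge hp hp' 0
    rw [c0p, c0p']
    have h1 := min_le_right ((j - 1) * r + (r - i + 1)) ((j' - 1) * r + (r - i' + 1))
    have h2 := le_max_left ((j - 1) * r + (r - i + 1)) ((j' - 1) * r + (r - i' + 1))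
    omega
  · right
    apply count_ge hp hp' 1
    rw [c1p, c1p']
    have h1 := min_le_left ((i - 1) * r + j) ((i' - 1) * r + j')
    have h2 := le_max_right ((i - 1) * r + j) ((i' - 1) * r + j')
    omega
  · right
    apply count_ge hp hp' 1
    rw [c1p, c1p']
    have h1 := min_le_right ((i - 1) * r + j) ((i' - 1) * r + j')
    have h2 := le_max_left ((i - 1) * r + j) ((i' - 1) * r + j')
    omega
end

section
/- (Marcus–Tardos bound) Let f(r) = r⁴·C(r²,r). For all positive integers p, q, r with p+q > 2, every point set M ⊆ [p]×[q] with |M| > f(r)·(p+q−2) contains an r×r-grid. -/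
/-- The Marcus–Tardos function f(r) = r⁴·C(r²,r). -/
def mtf (r : ℕ) : ℕ := r ^ 4 * Nat.choose (r ^ 2) r

open Finset in
/-- block index of a coordinate, blocks of size m -/
def bfl (m x : ℕ) : ℕ := (x - 1) / m + 1

def bmap (m : ℕ) (pt : Pt) : Pt := (bfl m pt.1, bfl m pt.2)

lemma bfl_pos (m x : ℕ) : 1 ≤ bfl m x := Nat.le_add_left 1 _

lemma bfl_lb (m x : ℕ) (hx : 1 ≤ x) : (bfl m x - 1) * m < x := by
  unfold bfl
  simp only [Nat.add_sub_cancel]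
  calc (x-1)/m * m ≤ x - 1 := Nat.div_mul_le_self _ _
    _ < x := by omega

lemma bfl_ub (m x : ℕ) (hm : 0 < m) : x ≤ bfl m x * m := by
  have h1 := Nat.div_add_mod (x-1) m
  have h2 := Nat.mod_lt (x-1) hm
  have h3 : bfl m x * m = m * ((x-1)/m) + m := by unfold bfl; ring
  omega

lemma bfl_mono (m : ℕ) {x y : ℕ} (h : x ≤ y) : bfl m x ≤ bfl m y := by
  unfold bfl
  exact Nat.add_le_add_right (Nat.div_le_div_right (by omega)) 1

lemma bfl_bounds {m x i : ℕ} (hm : 0 < m) (hx : 1 ≤ x) (h : bfl m x = i) :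
    (i - 1) * m + 1 ≤ x ∧ x ≤ i * m := by
  subst h
  exact ⟨bfl_lb m x hx, bfl_ub m x hm⟩

/-- lifting a grid in the contracted point set to a grid in the original. -/
lemma grid_lift (r m : ℕ) (hm : 0 < m) (M : Finset Pt)
    (hM1 : ∀ pt ∈ M, 1 ≤ pt.1 ∧ 1 ≤ pt.2)
    (h : ContainsGrid r (M.image (bmap m))) : ContainsGrid r M := by
  obtain ⟨a, b, ha, hb, hcell⟩ := h
  refine ⟨fun k => (a k - 1) * m + 1, fun k => (b k - 1) * m + 1, ?_, ?_, ?_⟩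
  · intro k l hkl
    have := ha hkl
    have : a k - 1 ≤ a l - 1 := by omega
    exact Nat.add_le_add_right (Nat.mul_le_mul_right m this) 1
  · intro k l hkl
    have := hb hkl
    have : b k - 1 ≤ b l - 1 := by omega
    exact Nat.add_le_add_right (Nat.mul_le_mul_right m this) 1
  · intro i j
    obtain ⟨p', hp', h1, h2, h3, h4⟩ := hcell i j
    obtain ⟨p, hp, rfl⟩ := Finset.mem_image.mp hp'
    obtain ⟨hx1, hy1⟩ := hM1 p hp
    simp only [bmap] at h1 h2 h3 h4
    refine ⟨p, hp, ?_, ?_, ?_, ?_⟩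
    all_goals simp only
    · have : (a i.castSucc - 1) * m ≤ (bfl m p.1 - 1) * m :=
        Nat.mul_le_mul_right m (by omega)
      have := bfl_lb m p.1 hx1
      omega
    · have hlt : bfl m p.1 ≤ a i.succ - 1 := by
        have : bfl m p.1 < a i.succ := h2
        omega
      have : bfl m p.1 * m ≤ (a i.succ - 1) * m := Nat.mul_le_mul_right m hlt
      have := bfl_ub m p.1 hm
      omega
    · have : (b j.castSucc - 1) * m ≤ (bfl m p.2 - 1) * m :=
        Nat.mul_le_mul_right m (by omega)
      have := bfl_lb m p.2 hy1
      omega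
    · have hlt : bfl m p.2 ≤ b j.succ - 1 := by
        have : bfl m p.2 < b j.succ := h4
        omega
      have : bfl m p.2 * m ≤ (b j.succ - 1) * m := Nat.mul_le_mul_right m hlt
      have := bfl_ub m p.2 hm
      omega

open Finset in
lemma wide_col (r m : ℕ) (hr : 1 ≤ r) (hm : 0 < m) (M : Finset Pt)
    (hM1 : ∀ pt ∈ M, 1 ≤ pt.1 ∧ 1 ≤ pt.2)
    (hng : ¬ ContainsGrid r M) (i : ℕ) (J : Finset ℕ)
    (hJ : ∀ j ∈ J, r ≤ ((M.filter (fun pt => bmap m pt = (i, j))).image Prod.fst).card) :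
    J.card ≤ (r - 1) * Nat.choose m r := by
  by_contra hcon
  push_neg at hcon
  set bX : ℕ → Finset ℕ :=
    fun j => (M.filter (fun pt => bmap m pt = (i, j))).image Prod.fst with hbX
  have hgex : ∀ j, r ≤ (bX j).card → ∃ t ⊆ bX j, t.card = r :=
    fun j h => Finset.exists_subset_card_eq h
  classical
  set g : ℕ → Finset ℕ := fun j =>
    if h : r ≤ (bX j).card then (hgex j h).choose else ∅ with hg
  have hgspec : ∀ j ∈ J, g j ⊆ bX j ∧ (g j).card = r := by
    intro j hj
    have h : r ≤ (bX j).card := hJ j hj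
    simp only [hg, dif_pos h]
    exact (hgex j h).choose_spec
  have hmaps : ∀ j ∈ J, g j ∈ (Finset.Icc ((i-1)*m + 1) (i*m)).powersetCard r := by
    intro j hj
    rw [Finset.mem_powersetCard]
    refine ⟨?_, (hgspec j hj).2⟩
    intro x hx
    have hx' := (hgspec j hj).1 hx
    simp only [hbX, Finset.mem_image, Finset.mem_filter] at hx'
    obtain ⟨pt, ⟨hptM, hpteq⟩, rfl⟩ := hx'
    have h1 : bfl m pt.1 = i := congrArg Prod.fst hpteq
    have hx1 := (hM1 pt hptM).1
    have h2 := bfl_lb m pt.1 hx1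
    have h3 := bfl_ub m pt.1 hm
    rw [h1] at h2 h3
    rw [Finset.mem_Icc]
    omega
  have hcard : ((Finset.Icc ((i-1)*m + 1) (i*m)).powersetCard r).card * (r-1) < J.card := by
    rw [Finset.card_powersetCard, Nat.card_Icc]
    have h1 : i * m + 1 - ((i-1)*m + 1) ≤ m := by
      have : (i-1)*m + m ≥ i * m := by
        rcases Nat.eq_zero_or_pos i with h | h
        · subst h; simp
        · have h2 : (i-1)*m + m = ((i-1)+1)*m := by ring
          rw [h2]
          have h3 : i - 1 + 1 = i := by omega
          rw [h3]
      omega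
    calc (i * m + 1 - ((i-1)*m + 1)).choose r * (r-1)
        ≤ m.choose r * (r-1) :=
          Nat.mul_le_mul_right _ (Nat.choose_le_choose r h1)
      _ < J.card := by rw [mul_comm]; exact hcon
  obtain ⟨S, hSmem, hSfib⟩ :=
    Finset.exists_lt_card_fiber_of_mul_lt_card_of_maps_to hmaps hcard
  have hrle : r ≤ (J.filter (fun j => g j = S)).card := by omega
  obtain ⟨T, hTsub, hTcard⟩ := Finset.exists_subset_card_eq hrle
  have hScard : S.card = r := by
    have hex : ∃ j, j ∈ J.filter (fun j => g j = S) := by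
      apply Finset.card_pos.mp; omega
    obtain ⟨j, hj⟩ := hex
    rw [Finset.mem_filter] at hj
    rw [← hj.2]
    exact (hgspec j hj.1).2
  set e1 := S.orderEmbOfFin hScard with he1
  set e2 := T.orderEmbOfFin hTcard with he2
  have hr1 : r - 1 < r := by omega
  -- threshold functions as plain ℕ → ℕ functions
  set A : ℕ → ℕ := fun n => if h : n < r then e1 ⟨n, h⟩ else e1 ⟨r-1, hr1⟩ + 1 with hA
  set B : ℕ → ℕ := fun n => if h : n < r then (e2 ⟨n, h⟩ - 1) * m + 1
                            else e2 ⟨r-1, hr1⟩ * m + 1 with hB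
  have hAval : ∀ n (h : n < r), A n = e1 ⟨n, h⟩ := fun n h => dif_pos h
  have hBval : ∀ n (h : n < r), B n = (e2 ⟨n, h⟩ - 1) * m + 1 := fun n h => dif_pos h
  have hAmono : ∀ n1 n2, n1 ≤ n2 → A n1 ≤ A n2 := by
    intro n1 n2 h
    simp only [hA]
    split_ifs with h1 h2 h2
    · exact e1.monotone (Fin.mk_le_mk.mpr h)
    · have : e1 ⟨n1, h1⟩ ≤ e1 ⟨r-1, hr1⟩ := e1.monotone (Fin.mk_le_mk.mpr (by omega))
      omega
    · omega
    · omega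
  have hBmono : ∀ n1 n2, n1 ≤ n2 → B n1 ≤ B n2 := by
    intro n1 n2 h
    simp only [hB]
    split_ifs with h1 h2 h2
    · have h3 : e2 ⟨n1, h1⟩ ≤ e2 ⟨n2, h2⟩ := e2.monotone (Fin.mk_le_mk.mpr h)
      have := Nat.mul_le_mul_right m (Nat.sub_le_sub_right h3 1)
      omega
    · have h3 : e2 ⟨n1, h1⟩ ≤ e2 ⟨r-1, hr1⟩ := e2.monotone (Fin.mk_le_mk.mpr (by omega))
      have := Nat.mul_le_mul_right m (Nat.sub_le_sub_right h3 1)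
      have : (e2 ⟨r-1, hr1⟩ - 1) * m ≤ e2 ⟨r-1, hr1⟩ * m :=
        Nat.mul_le_mul_right m (by omega)
      omega
    · omega
    · omega
  have hAstrict : ∀ n (h : n < r), e1 ⟨n, h⟩ < A (n+1) := by
    intro n h
    simp only [hA]
    split_ifs with h1
    · exact e1.strictMono (Fin.mk_lt_mk.mpr (by omega))
    · have heq : (⟨n, h⟩ : Fin r) = ⟨r-1, hr1⟩ := Fin.ext (show n = r - 1 by omega)
      rw [heq]
      omega
  have hBstrict : ∀ n (h : n < r) (y : ℕ), y ≤ e2 ⟨n, h⟩ * m → y < B (n+1) := by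
    intro n h y hy
    simp only [hB]
    split_ifs with h1
    · have h3 : e2 ⟨n, h⟩ ≤ e2 ⟨n+1, h1⟩ - 1 := by
        have := e2.strictMono (Fin.mk_lt_mk.mpr (show n < n+1 by omega) :
          (⟨n, h⟩ : Fin r) < ⟨n+1, h1⟩)
        omega
      have := Nat.mul_le_mul_right m h3
      omega
    · have heq : (⟨n, h⟩ : Fin r) = ⟨r-1, hr1⟩ := by
        apply Fin.ext; simp; omega
      rw [heq] at hy
      omega
  apply hng
  refine ⟨fun k => A ↑k, fun k => B ↑k, ?_, ?_, ?_⟩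
  · exact fun k l hkl => hAmono _ _ hkl
  · exact fun k l hkl => hBmono _ _ hkl
  · intro k l
    have hjmem : e2 ⟨(l : ℕ), l.isLt⟩ ∈ T := Finset.orderEmbOfFin_mem T hTcard _
    set j := e2 ⟨(l : ℕ), l.isLt⟩ with hj
    have hjJ : j ∈ J ∧ g j = S := by
      have := hTsub hjmem
      rw [Finset.mem_filter] at this
      exact this
    have hxS : e1 ⟨(k : ℕ), k.isLt⟩ ∈ S := Finset.orderEmbOfFin_mem S hScard _
    set x := e1 ⟨(k : ℕ), k.isLt⟩ with hx
    have hxB : x ∈ bX j := (hgspec j hjJ.1).1 (hjJ.2 ▸ hxS)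
    simp only [hbX, Finset.mem_image, Finset.mem_filter] at hxB
    obtain ⟨pt, ⟨hptM, hpteq⟩, hptx⟩ := hxB
    have hby : bfl m pt.2 = j := congrArg Prod.snd hpteq
    have hy1 := (hM1 pt hptM).2
    have hylb := bfl_lb m pt.2 hy1
    have hyub := bfl_ub m pt.2 hm
    rw [hby] at hylb hyub
    refine ⟨pt, hptM, ?_, ?_, ?_, ?_⟩
    · simp only [Fin.coe_castSucc]
      rw [hAval _ k.isLt]
      exact hptx.ge
    · simp only [Fin.val_succ]
      rw [hptx, hx]
      exact hAstrict _ k.isLt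
    · simp only [Fin.coe_castSucc]
      rw [hBval _ l.isLt, ← hj]
      omega
    · simp only [Fin.val_succ]
      exact hBstrict _ l.isLt pt.2 hyub

open Finset in
lemma grid_swap (r : ℕ) (M : Finset Pt)
    (h : ContainsGrid r (M.image Prod.swap)) : ContainsGrid r M := by
  obtain ⟨a, b, ha, hb, hcell⟩ := h
  refine ⟨b, a, hb, ha, ?_⟩
  intro i j
  obtain ⟨p, hp, h1, h2, h3, h4⟩ := hcell j i
  obtain ⟨p', hp', rfl⟩ := Finset.mem_image.mp hp
  exact ⟨p', hp', h3, h4, h1, h2⟩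

lemma swap_block (m : ℕ) (M : Finset Pt) (b : Pt) :
    (M.image Prod.swap).filter (fun pt => bmap m pt = Prod.swap b)
      = (M.filter (fun pt => bmap m pt = b)).image Prod.swap := by
  ext pt
  simp only [Finset.mem_filter, Finset.mem_image]
  constructor
  · rintro ⟨⟨q, hq, rfl⟩, h⟩
    refine ⟨q, ⟨hq, ?_⟩, rfl⟩
    have : bmap m q.swap = (bmap m q).swap := rfl
    rw [this] at h
    exact Prod.swap_injective h
  · rintro ⟨q, ⟨hq, hq2⟩, rfl⟩
    exact ⟨⟨q, hq, rfl⟩, by rw [show bmap m q.swap = (bmap m q).swap from rfl, hq2]⟩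

lemma tall_row (r m : ℕ) (hr : 1 ≤ r) (hm : 0 < m) (M : Finset Pt)
    (hM1 : ∀ pt ∈ M, 1 ≤ pt.1 ∧ 1 ≤ pt.2)
    (hng : ¬ ContainsGrid r M) (j : ℕ) (I : Finset ℕ)
    (hI : ∀ i ∈ I, r ≤ ((M.filter (fun pt => bmap m pt = (i, j))).image Prod.snd).card) :
    I.card ≤ (r - 1) * Nat.choose m r := by
  apply wide_col r m hr hm (M.image Prod.swap)
    (fun pt hpt => by
      obtain ⟨q, hq, rfl⟩ := Finset.mem_image.mp hpt
      exact ⟨(hM1 q hq).2, (hM1 q hq).1⟩)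
    (fun h => hng (grid_swap r M h)) j I
  intro i hi
  have := hI i hi
  have heq : (M.image Prod.swap).filter (fun pt => bmap m pt = (j, i))
      = (M.filter (fun pt => bmap m pt = (i, j))).image Prod.swap := swap_block m M (i, j)
  rw [heq, Finset.image_image]
  have : Prod.fst ∘ Prod.swap = (Prod.snd : Pt → ℕ) := rfl
  rw [this]
  exact hI i hi

lemma final_arith (r C P Q p q W T N Mc : ℕ) (hr : 2 ≤ r) (hs : 4 ≤ P+Q)
    (hpq : r^2*(P+Q-2) ≤ p+q-2)
    (hW : W ≤ P*((r-1)*C)) (hT : T ≤ Q*((r-1)*C)) (hN : N ≤ r^4*C*(P+Q-2))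
    (hM : Mc ≤ (r-1)*(r-1)*N + r^4*W + r^4*T) :
    Mc ≤ r^4*C*(p+q-2) := by
  obtain ⟨u, rfl⟩ : ∃ u, r = u + 2 := ⟨r - 2, by omega⟩
  obtain ⟨t, ht⟩ : ∃ t, P + Q = t + 4 := ⟨P + Q - 4, by omega⟩
  have key : (u+2-1)*(u+2-1)*((t+4)-2) + (P+Q)*(u+2-1) ≤ (u+2)^2*((t+4)-2) := by
    rw [ht]
    have h1 : u + 2 - 1 = u + 1 := by omega
    rw [h1]
    have h2 : t + 4 - 2 = t + 2 := by omega
    rw [h2]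
    nlinarith [Nat.zero_le (u*t), Nat.zero_le u, Nat.zero_le t]
  calc Mc ≤ (u+2-1)*(u+2-1)*((u+2)^4*C*(P+Q-2)) + (u+2)^4*(P*((u+2-1)*C))
            + (u+2)^4*(Q*((u+2-1)*C)) := by
        refine le_trans hM ?_
        gcongr
  _ = (u+2)^4*C*((u+2-1)*(u+2-1)*(P+Q-2) + (P+Q)*(u+2-1)) := by ring
  _ ≤ (u+2)^4*C*((u+2)^2*(P+Q-2)) := by
        apply Nat.mul_le_mul_left
        rw [ht] at key ⊢
        exact key
  _ = (u+2)^4*((u+2)^2*(P+Q-2))*C := by ring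
  _ ≤ (u+2)^4*(p+q-2)*C := by
        apply Nat.mul_le_mul_right
        exact Nat.mul_le_mul_left _ hpq
  _ = (u+2)^4*C*(p+q-2) := by ring

open Finset in
theorem key_main (r : ℕ) (hr : 2 ≤ r) : ∀ n p q : ℕ, p + q ≤ n → 0 < p → 0 < q →
    2 < p + q → ∀ M : Finset Pt, M ⊆ Finset.Icc 1 p ×ˢ Finset.Icc 1 q →
    mtf r * (p + q - 2) < M.card → ContainsGrid r M := by
  intro n
  induction n with
  | zero => intro p q h hp hq; omega
  | succ n ih =>
  intro p q hn hp hq hpq M hM hcard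
  classical
  set m := r ^ 2 with hmdef
  have hm : 0 < m := by positivity
  have hm4 : 4 ≤ m := by
    calc 4 = 2^2 := rfl
    _ ≤ r^2 := Nat.pow_le_pow_left hr 2
  have hrm : r ≤ m := by
    have h := Nat.mul_le_mul_left r (show 1 ≤ r by omega)
    rw [mul_one] at h
    calc r ≤ r * r := h
    _ = m := by rw [hmdef]; ring
  have hC1 : 1 ≤ Nat.choose m r := Nat.choose_pos hrm
  have hmtf : mtf r = (m * m) * Nat.choose m r := by rw [hmdef]; unfold mtf; ring_nf
  have hM1 : ∀ pt ∈ M, (1 ≤ pt.1 ∧ pt.1 ≤ p) ∧ (1 ≤ pt.2 ∧ pt.2 ≤ q) := by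
    intro pt hpt
    have := hM hpt
    rw [Finset.mem_product, Finset.mem_Icc, Finset.mem_Icc] at this
    exact this
  have hM1' : ∀ pt ∈ M, 1 ≤ pt.1 ∧ 1 ≤ pt.2 :=
    fun pt hpt => ⟨(hM1 pt hpt).1.1, (hM1 pt hpt).2.1⟩
  by_cases hbase : p ≤ 2*m ∧ q ≤ 2*m
  · -- base case: the cardinality bound is contradictory
    exfalso
    have h1 : M.card ≤ p * q := by
      calc M.card ≤ ((Finset.Icc 1 p) ×ˢ (Finset.Icc 1 q)).card := Finset.card_le_card hM
      _ = p * q := by rw [Finset.card_product, Nat.card_Icc, Nat.card_Icc,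
            Nat.add_sub_cancel, Nat.add_sub_cancel]
    have h2 : p * q ≤ mtf r * (p + q - 2) := by
      rcases Nat.lt_or_ge (p + q) 4 with h4 | h4
      · -- p + q = 3
        have hcase : p = 1 ∧ q = 2 ∨ p = 2 ∧ q = 1 := by omega
        have hmm : 2 ≤ (m * m) * Nat.choose m r := by
          have h5 : m ≤ m * m := Nat.le_mul_of_pos_left m hm
          have h6 : m * m = (m*m) * 1 := (mul_one _).symm
          have h7 : (m*m)*1 ≤ (m*m) * Nat.choose m r := Nat.mul_le_mul_left _ hC1
          omega
        rw [hmtf]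
        rcases hcase with ⟨rfl, rfl⟩ | ⟨rfl, rfl⟩ <;> simpa using hmm
      · have hmin : p * q ≤ m * (p + q) := by
          rcases le_total p q with h | h
          · calc p * q ≤ p * (2*m) := Nat.mul_le_mul_left p (by omega)
            _ = m * (p + p) := by ring
            _ ≤ m * (p + q) := Nat.mul_le_mul_left m (by omega)
          · calc p * q ≤ 2*m * q := Nat.mul_le_mul_right q (by omega)
            _ = m * (q + q) := by ring
            _ ≤ m * (p + q) := Nat.mul_le_mul_left m (by omega)
        have h2m : 2 * m ≤ mtf r := by
          rw [hmtf]
          calc 2 * m ≤ m * m := Nat.mul_le_mul_right m (by omega)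
          _ = (m * m) * 1 := (mul_one _).symm
          _ ≤ (m * m) * Nat.choose m r := Nat.mul_le_mul_left _ hC1
        calc p * q ≤ m * (p + q) := hmin
        _ ≤ m * (2 * (p + q - 2)) := Nat.mul_le_mul_left m (by omega)
        _ = 2 * m * (p + q - 2) := by ring
        _ ≤ mtf r * (p + q - 2) := Nat.mul_le_mul_right _ h2m
    omega
  · -- recursive case
    have hbig : 2*m < p ∨ 2*m < q := by
      by_contra h
      push_neg at h
      exact hbase ⟨by omega, by omega⟩
    by_contra hng
    set P := bfl m p with hPdef
    set Q := bfl m q with hQdef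
    set M' := M.image (bmap m) with hM'def
    have hP1 : 1 ≤ P := bfl_pos m p
    have hQ1 : 1 ≤ Q := bfl_pos m q
    have hdiv2 : ∀ x : ℕ, 2*m < x → 3 ≤ bfl m x := by
      intro x hx
      have : 2 ≤ (x-1)/m := Nat.le_div_iff_mul_le hm |>.mpr (by omega)
      unfold bfl
      omega
    have hdivlt : ∀ x : ℕ, 2*m < x → bfl m x < x := by
      intro x hx
      have h1 : (x-1)/m ≤ (x-1)/4 := Nat.div_le_div_left hm4 (by norm_num)
      unfold bfl
      omega
    have hlep : P ≤ p := by
      have : (p-1)/m ≤ p - 1 := Nat.div_le_self _ _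
      unfold P; unfold bfl; omega
    have hleq : Q ≤ q := by
      have : (q-1)/m ≤ q - 1 := Nat.div_le_self _ _
      unfold Q; unfold bfl; omega
    have hPQ4 : 4 ≤ P + Q := by
      rcases hbig with h | h
      · have := hdiv2 p h; omega
      · have := hdiv2 q h; omega
    have hPQlt : P + Q < p + q := by
      rcases hbig with h | h
      · have := hdivlt p h; omega
      · have := hdivlt q h; omega
    have hM'sub : M' ⊆ Finset.Icc 1 P ×ˢ Finset.Icc 1 Q := by
      intro b hb
      obtain ⟨pt, hpt, rfl⟩ := Finset.mem_image.mp hb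
      rw [Finset.mem_product, Finset.mem_Icc, Finset.mem_Icc]
      exact ⟨⟨bfl_pos m pt.1, bfl_mono m (hM1 pt hpt).1.2⟩,
             ⟨bfl_pos m pt.2, bfl_mono m (hM1 pt hpt).2.2⟩⟩
    -- number of nonempty blocks
    have hM'card : M'.card ≤ mtf r * (P + Q - 2) := by
      by_contra h
      push_neg at h
      exact hng (grid_lift r m hm M hM1'
        (ih P Q (by omega) (by omega) (by omega) (by omega) M' hM'sub h))
    -- wide and tall blocks
    set wideP : Pt → Prop :=
      fun b => r ≤ ((M.filter (fun pt => bmap m pt = b)).image Prod.fst).card with hwideP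
    set tallP : Pt → Prop :=
      fun b => r ≤ ((M.filter (fun pt => bmap m pt = b)).image Prod.snd).card with htallP
    have hwide : (M'.filter wideP).card ≤ P * ((r-1) * Nat.choose m r) := by
      have hfib : ∀ b ∈ M'.filter wideP, b.1 ∈ Finset.Icc 1 P := by
        intro b hb
        have := hM'sub (Finset.mem_filter.mp hb).1
        rw [Finset.mem_product] at this
        exact this.1
      rw [Finset.card_eq_sum_card_fiberwise hfib]
      have hbound : ∀ i ∈ Finset.Icc 1 P,
          ((M'.filter wideP).filter (fun b => b.1 = i)).card ≤ (r-1) * Nat.choose m r := by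
        intro i _
        set Fi := (M'.filter wideP).filter (fun b => b.1 = i) with hFi
        have hinj : Set.InjOn Prod.snd (Fi : Set Pt) := by
          intro b hb b' hb' hsnd
          simp only [hFi, Finset.coe_filter, Set.mem_setOf_eq] at hb hb'
          exact Prod.ext (hb.2.trans hb'.2.symm) hsnd
        rw [← Finset.card_image_of_injOn hinj]
        apply wide_col r m (by omega) hm M hM1' hng i
        intro j hj
        obtain ⟨b, hb, rfl⟩ := Finset.mem_image.mp hj
        simp only [hFi, Finset.mem_filter] at hb
        have hbeq : b = (i, b.2) := Prod.ext hb.2 rfl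
        have := hb.1.2
        rw [hwideP] at this
        rw [← hbeq]
        exact this
      calc ∑ i ∈ Finset.Icc 1 P, ((M'.filter wideP).filter (fun b => b.1 = i)).card
          ≤ ∑ i ∈ Finset.Icc 1 P, ((r-1) * Nat.choose m r) := Finset.sum_le_sum hbound
      _ = P * ((r-1) * Nat.choose m r) := by
          rw [Finset.sum_const, Nat.card_Icc, Nat.add_sub_cancel, smul_eq_mul]
    have htall : (M'.filter tallP).card ≤ Q * ((r-1) * Nat.choose m r) := by
      have hfib : ∀ b ∈ M'.filter tallP, b.2 ∈ Finset.Icc 1 Q := by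
        intro b hb
        have := hM'sub (Finset.mem_filter.mp hb).1
        rw [Finset.mem_product] at this
        exact this.2
      rw [Finset.card_eq_sum_card_fiberwise hfib]
      have hbound : ∀ j ∈ Finset.Icc 1 Q,
          ((M'.filter tallP).filter (fun b => b.2 = j)).card ≤ (r-1) * Nat.choose m r := by
        intro j _
        set Fj := (M'.filter tallP).filter (fun b => b.2 = j) with hFj
        have hinj : Set.InjOn Prod.fst (Fj : Set Pt) := by
          intro b hb b' hb' hfst
          simp only [hFj, Finset.coe_filter, Set.mem_setOf_eq] at hb hb'
          exact Prod.ext hfst (hb.2.trans hb'.2.symm)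
        rw [← Finset.card_image_of_injOn hinj]
        apply tall_row r m (by omega) hm M hM1' hng j
        intro i hi
        obtain ⟨b, hb, rfl⟩ := Finset.mem_image.mp hi
        simp only [hFj, Finset.mem_filter] at hb
        have hbeq : b = (b.1, j) := Prod.ext rfl hb.2
        have := hb.1.2
        rw [htallP] at this
        rw [← hbeq]
        exact this
      calc ∑ j ∈ Finset.Icc 1 Q, ((M'.filter tallP).filter (fun b => b.2 = j)).card
          ≤ ∑ j ∈ Finset.Icc 1 Q, ((r-1) * Nat.choose m r) := Finset.sum_le_sum hbound
      _ = Q * ((r-1) * Nat.choose m r) := by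
          rw [Finset.sum_const, Nat.card_Icc, Nat.add_sub_cancel, smul_eq_mul]
    -- per-block size bounds
    have hsize : ∀ b ∈ M', (M.filter (fun pt => bmap m pt = b)).card ≤ m * m := by
      intro b hb
      have hb1 : 1 ≤ b.1 ∧ 1 ≤ b.2 := by
        have := hM'sub hb
        rw [Finset.mem_product, Finset.mem_Icc, Finset.mem_Icc] at this
        exact ⟨this.1.1, this.2.1⟩
      have hsub : M.filter (fun pt => bmap m pt = b) ⊆
          Finset.Icc ((b.1-1)*m+1) (b.1*m) ×ˢ Finset.Icc ((b.2-1)*m+1) (b.2*m) := by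
        intro pt hpt
        rw [Finset.mem_filter] at hpt
        have h1 : bfl m pt.1 = b.1 := congrArg Prod.fst hpt.2
        have h2 : bfl m pt.2 = b.2 := congrArg Prod.snd hpt.2
        have e1 := bfl_lb m pt.1 (hM1' pt hpt.1).1
        have e2 := bfl_ub m pt.1 hm
        have e3 := bfl_lb m pt.2 (hM1' pt hpt.1).2
        have e4 := bfl_ub m pt.2 hm
        rw [h1] at e1 e2
        rw [h2] at e3 e4
        rw [Finset.mem_product, Finset.mem_Icc, Finset.mem_Icc]
        omega
      calc (M.filter (fun pt => bmap m pt = b)).card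
          ≤ _ := Finset.card_le_card hsub
      _ ≤ m * m := by
          rw [Finset.card_product, Nat.card_Icc, Nat.card_Icc]
          apply Nat.mul_le_mul
          · obtain ⟨i, hi⟩ : ∃ i, b.1 = i + 1 := ⟨b.1 - 1, by omega⟩
            rw [hi]
            have : (i+1)*m = i*m + m := by ring
            simp only [Nat.add_sub_cancel]
            omega
          · obtain ⟨j, hj⟩ : ∃ j, b.2 = j + 1 := ⟨b.2 - 1, by omega⟩
            rw [hj]
            have : (j+1)*m = j*m + m := by ring
            simp only [Nat.add_sub_cancel]
            omega
    have hsmall : ∀ b ∈ M', ¬ wideP b → ¬ tallP b →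
        (M.filter (fun pt => bmap m pt = b)).card ≤ (r-1)*(r-1) := by
      intro b _ hw ht
      set s := M.filter (fun pt => bmap m pt = b) with hs
      have hsub : s ⊆ (s.image Prod.fst) ×ˢ (s.image Prod.snd) := by
        intro pt hpt
        rw [Finset.mem_product]
        exact ⟨Finset.mem_image_of_mem _ hpt, Finset.mem_image_of_mem _ hpt⟩
      calc s.card ≤ _ := Finset.card_le_card hsub
      _ = (s.image Prod.fst).card * (s.image Prod.snd).card := Finset.card_product _ _
      _ ≤ (r-1)*(r-1) := by
          rw [hwideP] at hw
          rw [htallP] at ht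
          push_neg at hw ht
          rw [← hs] at hw ht
          exact Nat.mul_le_mul (by omega) (by omega)
    -- the counting
    have hcount : M.card ≤ (r-1)*(r-1) * M'.card
        + (m*m) * (M'.filter wideP).card + (m*m) * (M'.filter tallP).card := by
      have h0 : M.card = ∑ b ∈ M', (M.filter (fun a => bmap m a = b)).card :=
        Finset.card_eq_sum_card_image (bmap m) M
      have h1 : ∀ b ∈ M', (M.filter (fun a => bmap m a = b)).card ≤
          (r-1)*(r-1) + ((if wideP b then m*m else 0) + (if tallP b then m*m else 0)) := by
        intro b hb
        by_cases hw : wideP b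
        · have := hsize b hb
          simp only [if_pos hw]
          omega
        · by_cases ht : tallP b
          · have := hsize b hb
            simp only [if_neg hw, if_pos ht]
            omega
          · have := hsmall b hb hw ht
            simp only [if_neg hw, if_neg ht]
            omega
      calc M.card = ∑ b ∈ M', (M.filter (fun a => bmap m a = b)).card := h0
      _ ≤ ∑ b ∈ M', ((r-1)*(r-1)
            + ((if wideP b then m*m else 0) + (if tallP b then m*m else 0))) :=
          Finset.sum_le_sum h1
      _ = ∑ b ∈ M', (r-1)*(r-1) + (∑ b ∈ M', (if wideP b then m*m else 0)
            + ∑ b ∈ M', (if tallP b then m*m else 0)) := by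
          rw [Finset.sum_add_distrib, Finset.sum_add_distrib]
      _ = (r-1)*(r-1) * M'.card + (m*m) * (M'.filter wideP).card
            + (m*m) * (M'.filter tallP).card := by
          rw [← Finset.sum_filter wideP (fun _ => m*m),
              ← Finset.sum_filter tallP (fun _ => m*m),
              Finset.sum_const, Finset.sum_const, Finset.sum_const,
              smul_eq_mul, smul_eq_mul, smul_eq_mul]
          ring
    -- block-arithmetic relating p,q to P,Q
    have hpqPQ : r^2 * (P + Q - 2) ≤ p + q - 2 := by
      have e1 : (P-1)*m ≤ p - 1 := by
        have h := bfl_lb m p hp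
        unfold P
        omega
      have e2 : (Q-1)*m ≤ q - 1 := by
        have h := bfl_lb m q hq
        unfold Q
        omega
      have e3 : (P+Q-2)*m = (P-1)*m + (Q-1)*m := by
        rw [← Nat.add_mul]
        congr 1
        omega
      rw [← hmdef, mul_comm]
      omega
    -- put it together
    have hfinal : M.card ≤ r^4 * Nat.choose (r^2) r * (p + q - 2) := by
      apply final_arith r (Nat.choose (r^2) r) P Q p q
        (M'.filter wideP).card (M'.filter tallP).card M'.card M.card hr hPQ4 hpqPQ
      · rw [← hmdef]; exact hwide
      · rw [← hmdef]; exact htall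
      · have : mtf r = r^4 * Nat.choose (r^2) r := rfl
        rw [← this]; exact hM'card
      · have hmm : m * m = r^4 := by rw [hmdef]; ring
        rw [← hmm]
        exact hcount
    have : mtf r = r^4 * Nat.choose (r^2) r := rfl
    rw [← this] at hfinal
    omega

/-- the Marcus–Tardos bound. -/
theorem stmt7 (p q r : ℕ) (hp : 0 < p) (hq : 0 < q) (hr : 0 < r) (hpq : 2 < p + q)
    (M : Finset Pt) (hM : M ⊆ Finset.Icc 1 p ×ˢ Finset.Icc 1 q)
    (hcard : mtf r * (p + q - 2) < M.card) : ContainsGrid r M := by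
  rcases Nat.lt_or_ge r 2 with h1 | h2
  · -- r = 1 : any nonempty point set contains a 1×1 grid
    have hr1 : r = 1 := by omega
    subst hr1
    have hpos : 0 < M.card := lt_of_le_of_lt (Nat.zero_le _) hcard
    obtain ⟨p0, hp0⟩ := Finset.card_pos.mp hpos
    refine ⟨fun k => p0.1 + k.val, fun k => p0.2 + k.val, ?_, ?_, ?_⟩
    · intro k l hkl
      exact Nat.add_le_add_left hkl p0.1
    · intro k l hkl
      exact Nat.add_le_add_left hkl p0.2
    · intro i j
      have hi : (i : ℕ) = 0 := by omega
      have hj : (j : ℕ) = 0 := by omega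
      refine ⟨p0, hp0, ?_, ?_, ?_, ?_⟩ <;>
        simp [Fin.coe_castSucc, Fin.val_succ, hi, hj]
  · exact key_main r h2 (p + q) p q le_rfl hp hq hpq M hM hcard
end

section
/- In the inductive step of the Marcus–Tardos proof: if M ⊆ [p]×[q] has no r×r-grid and M' ⊆ [p']×[q'] is the blocked point set (one point per nonempty r²×r² block), then M' has no r×r-grid. -/
/-- The block index of a point, for blocks of side r². -/
def blockOf (r : ℕ) (z : Pt) : Pt := ((z.1 - 1) / r ^ 2 + 1, (z.2 - 1) / r ^ 2 + 1)

lemma stmt8_aux (r2 w lo hi : ℕ) (hr : 0 < r2) (hw : 1 ≤ w)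
    (h1 : lo ≤ (w - 1) / r2 + 1) (h2 : (w - 1) / r2 + 1 < hi) :
    (lo - 1) * r2 + 1 ≤ w ∧ w < (hi - 1) * r2 + 1 := by
  obtain ⟨w', rfl⟩ : ∃ w', w = w' + 1 := ⟨w - 1, by omega⟩
  simp only [Nat.add_sub_cancel] at h1 h2
  constructor
  · have h3 : lo - 1 ≤ w' / r2 := Nat.sub_le_of_le_add h1
    exact Nat.succ_le_succ ((Nat.le_div_iff_mul_le hr).mp h3)
  · have h3 : w' / r2 < hi - 1 := Nat.lt_sub_of_add_lt h2
    exact Nat.succ_lt_succ ((Nat.div_lt_iff_lt_mul hr).mp h3)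

/-- if M has no r×r-grid then neither has the blocked point set M'. -/
theorem stmt8 (p q r : ℕ) (hr : 0 < r) (M : Finset Pt)
    (hM : M ⊆ Finset.Icc 1 p ×ˢ Finset.Icc 1 q)
    (h : ¬ ContainsGrid r M) : ¬ ContainsGrid r (M.image (blockOf r)) := by
  intro hc
  apply h
  obtain ⟨a, b, ha, hb, hcell⟩ := hc
  have hr2 : 0 < r ^ 2 := by positivity
  refine ⟨fun i => (a i - 1) * r ^ 2 + 1, fun j => (b j - 1) * r ^ 2 + 1, ?_, ?_, ?_⟩
  · intro i j hij
    have := ha hij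
    have : a i - 1 ≤ a j - 1 := by omega
    exact Nat.add_le_add_right (Nat.mul_le_mul_right _ this) 1
  · intro i j hij
    have := hb hij
    have : b i - 1 ≤ b j - 1 := by omega
    exact Nat.add_le_add_right (Nat.mul_le_mul_right _ this) 1
  · intro i j
    obtain ⟨P, hP, h1, h2, h3, h4⟩ := hcell i j
    obtain ⟨z, hz, rfl⟩ := Finset.mem_image.mp hP
    have hzm := hM hz
    rw [Finset.mem_product, Finset.mem_Icc, Finset.mem_Icc] at hzm
    have hx := stmt8_aux (r ^ 2) z.1 (a i.castSucc) (a i.succ) hr2 hzm.1.1 h1 h2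
    have hy := stmt8_aux (r ^ 2) z.2 (b j.castSucc) (b j.succ) hr2 hzm.2.1 h3 h4
    exact ⟨z, hz, hx.1, hx.2, hy.1, hy.2⟩
end

section
/- In the Marcus–Tardos proof: if M ⊆ [p]×[q] has no r×r-grid, then for every block-column x, the number of wide blocks in column x is less than r·C(r²,r), where a block is wide if it contains points of M in at least r distinct columns of [p]. -/
lemma blk_bounds {n a b : ℕ} (hn : 0 < n) (ha : 1 ≤ a) (h : (a - 1) / n + 1 = b) :
    (b - 1) * n + 1 ≤ a ∧ a ≤ b * n := by
  obtain ⟨a', rfl⟩ := Nat.exists_eq_add_of_le ha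
  subst h
  simp only [Nat.add_sub_cancel, Nat.add_sub_cancel_left]
  have h1 : n * (a' / n) + a' % n = a' := Nat.div_add_mod a' n
  have h2 : a' % n < n := Nat.mod_lt _ hn
  constructor
  · rw [Nat.mul_comm]; linarith [Nat.zero_le (a' % n)]
  · rw [Nat.add_mul, one_mul, Nat.mul_comm]; linarith [Nat.zero_le (a' % n)]

/-- if M has no r×r-grid then every block-column contains fewer than
r·C(r²,r) wide blocks, where a block is wide if M meets it in ≥ r distinct columns. -/
theorem stmt9 (p q r : ℕ) (hr : 0 < r) (M : Finset Pt)
    (hM : M ⊆ Finset.Icc 1 p ×ˢ Finset.Icc 1 q)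
    (h : ¬ ContainsGrid r M) (x : ℕ) :
    ((Finset.Icc 1 q).filter (fun y =>
        r ≤ ((M.filter (fun z => blockOf r z = (x, y))).image Prod.fst).card)).card
      < r * Nat.choose (r ^ 2) r := by
  by_contra hcon
  push_neg at hcon
  set n := r ^ 2 with hn
  have hn0 : 0 < n := by positivity
  have hrn : r ≤ n := by rw [hn]; exact Nat.le_self_pow (by norm_num) r
  set W := (Finset.Icc 1 q).filter (fun y =>
      r ≤ ((M.filter (fun z => blockOf r z = (x, y))).image Prod.fst).card) with hWdef
  have hchoose : 0 < Nat.choose n r := Nat.choose_pos hrn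
  have hWpos : 0 < W.card := lt_of_lt_of_le (Nat.mul_pos hr hchoose) hcon
  have hext : ∀ y ∈ W, ∀ c ∈ ((M.filter (fun z => blockOf r z = (x, y))).image Prod.fst),
      ∃ z ∈ M, z.1 = c ∧ (z.1 - 1) / n + 1 = x ∧ (z.2 - 1) / n + 1 = y := by
    intro y hy c hc
    simp only [Finset.mem_image, Finset.mem_filter] at hc
    obtain ⟨z, ⟨hzM, hzb⟩, rfl⟩ := hc
    refine ⟨z, hzM, rfl, ?_, ?_⟩
    · have := congrArg Prod.fst hzb; simpa [blockOf, hn] using this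
    · have := congrArg Prod.snd hzb; simpa [blockOf, hn] using this
  have hx1 : 1 ≤ x := by
    obtain ⟨y₀, hy₀⟩ := Finset.card_pos.mp hWpos
    have hy₀' := (Finset.mem_filter.mp hy₀).2
    have hne : ((M.filter (fun z => blockOf r z = (x, y₀))).image Prod.fst).Nonempty := by
      rw [← Finset.card_pos]; omega
    obtain ⟨c, hc⟩ := hne
    obtain ⟨z, _, _, hzx, _⟩ := hext y₀ hy₀ c hc
    exact hzx ▸ Nat.le_add_left 1 _
  have hzM1 : ∀ z ∈ M, 1 ≤ z.1 ∧ 1 ≤ z.2 := by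
    intro z hz
    have := hM hz
    simp only [Finset.mem_product, Finset.mem_Icc] at this
    omega
  set Icol := Finset.Icc ((x - 1) * n + 1) (x * n) with hIcol
  have hIcolcard : Icol.card = n := by
    rw [hIcol, Nat.card_Icc]
    obtain ⟨x', rfl⟩ := Nat.exists_eq_add_of_le hx1
    simp only [Nat.add_sub_cancel_left]
    rw [Nat.add_mul, one_mul]
    generalize x' * n = K
    omega
  have hsubI : ∀ y ∈ W,
      ((M.filter (fun z => blockOf r z = (x, y))).image Prod.fst) ⊆ Icol := by
    intro y hy c hc
    obtain ⟨z, hzM, rfl, hzx, _⟩ := hext y hy c hc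
    have hb := blk_bounds hn0 (hzM1 z hzM).1 hzx
    simp only [hIcol, Finset.mem_Icc]
    exact hb
  have hsel0 : ∀ y, ∃ S : Finset ℕ, y ∈ W →
      S ⊆ ((M.filter (fun z => blockOf r z = (x, y))).image Prod.fst) ∧ S.card = r := by
    intro y
    by_cases hy : y ∈ W
    · have hy' := (Finset.mem_filter.mp hy).2
      obtain ⟨S, hS1, hS2⟩ := Finset.exists_subset_card_eq hy'
      exact ⟨S, fun _ => ⟨hS1, hS2⟩⟩
    · exact ⟨∅, fun hy' => absurd hy' hy⟩
  choose sel hsel using hsel0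
  have hmaps : ∀ y ∈ W, sel y ∈ Icol.powersetCard r := by
    intro y hy
    rw [Finset.mem_powersetCard]
    exact ⟨(hsel y hy).1.trans (hsubI y hy), (hsel y hy).2⟩
  have htne : (Icol.powersetCard r).Nonempty := by
    rw [← Finset.card_pos, Finset.card_powersetCard, hIcolcard]; exact hchoose
  have hcard : (Icol.powersetCard r).card * r ≤ W.card := by
    rw [Finset.card_powersetCard, hIcolcard, mul_comm]; exact hcon
  obtain ⟨S, hSmem, hSfib⟩ :=
    Finset.exists_le_card_fiber_of_mul_le_card_of_maps_to hmaps htne hcard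
  obtain ⟨Y, hYsub, hYcard⟩ := Finset.exists_subset_card_eq hSfib
  have hScard : S.card = r := (Finset.mem_powersetCard.mp hSmem).2
  set f := S.orderEmbOfFin hScard with hf
  set g := Y.orderEmbOfFin hYcard with hg
  have hpt : ∀ i j : Fin r, ∃ z ∈ M, z.1 = f i ∧
      (z.1 - 1) / n + 1 = x ∧ (z.2 - 1) / n + 1 = g j := by
    intro i j
    have hgj : g j ∈ Y := Finset.orderEmbOfFin_mem Y hYcard j
    have hgj' := hYsub hgj
    rw [Finset.mem_filter] at hgj'
    obtain ⟨hgW, hgS⟩ := hgj'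
    have hfi : f i ∈ sel (g j) := by
      rw [hgS]; exact Finset.orderEmbOfFin_mem S hScard i
    exact hext (g j) hgW (f i) ((hsel (g j) hgW).1 hfi)
  apply h
  refine ⟨fun i => if hi : (i : ℕ) < r then f ⟨i, hi⟩
            else f ⟨r - 1, Nat.sub_lt hr Nat.one_pos⟩ + 1,
    fun j => if hj : (j : ℕ) < r then (g ⟨j, hj⟩ - 1) * n + 1
            else g ⟨r - 1, Nat.sub_lt hr Nat.one_pos⟩ * n + 1,
    ?_, ?_, ?_⟩
  · intro i j hij
    have hij' : (i : ℕ) ≤ (j : ℕ) := hij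
    dsimp only
    split_ifs with h1 h2 h2
    · exact f.monotone (by simp only [Fin.mk_le_mk]; omega)
    · exact le_trans (f.monotone (by simp only [Fin.mk_le_mk]; omega)) (Nat.le_succ _)
    · omega
    · exact le_rfl
  · intro i j hij
    have hij' : (i : ℕ) ≤ (j : ℕ) := hij
    dsimp only
    split_ifs with h1 h2 h2
    · have hm : g ⟨(i : ℕ), h1⟩ - 1 ≤ g ⟨(j : ℕ), h2⟩ - 1 :=
        Nat.sub_le_sub_right (g.monotone (by simp only [Fin.mk_le_mk]; omega)) 1
      exact Nat.add_le_add_right (mul_le_mul_left hm n) 1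
    · have hm : g ⟨(i : ℕ), h1⟩ - 1 ≤ g ⟨r - 1, Nat.sub_lt hr Nat.one_pos⟩ :=
        le_trans (Nat.sub_le _ _) (g.monotone (by simp only [Fin.mk_le_mk]; omega))
      exact Nat.add_le_add_right (mul_le_mul_left hm n) 1
    · omega
    · exact le_rfl
  · intro i j
    obtain ⟨z, hzM, hz1, hzx, hzy⟩ := hpt i j
    have hb := blk_bounds hn0 (hzM1 z hzM).2 hzy
    refine ⟨z, hzM, ?_, ?_, ?_, ?_⟩
    · dsimp only
      simp only [Fin.coe_castSucc]
      rw [dif_pos i.isLt, hz1]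
    · dsimp only
      simp only [Fin.val_succ]
      by_cases hi : (i : ℕ) + 1 < r
      · rw [dif_pos hi, hz1]
        exact f.strictMono (by simp [Fin.lt_def])
      · rw [dif_neg hi, hz1]
        have hil := i.isLt
        have hmono : f i ≤ f ⟨r - 1, Nat.sub_lt hr Nat.one_pos⟩ :=
          f.monotone (by simp only [Fin.le_def]; omega)
        omega
    · dsimp only
      simp only [Fin.coe_castSucc]
      rw [dif_pos j.isLt]
      simpa [Fin.eta] using hb.1
    · dsimp only
      simp only [Fin.val_succ]
      by_cases hj : (j : ℕ) + 1 < r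
      · rw [dif_pos hj]
        have hlt : g j < g ⟨(j : ℕ) + 1, hj⟩ := g.strictMono (by simp [Fin.lt_def])
        have h3 : g j ≤ g ⟨(j : ℕ) + 1, hj⟩ - 1 := by omega
        exact Nat.lt_succ_of_le (hb.2.trans (mul_le_mul_left h3 n))
      · rw [dif_neg hj]
        have hjl := j.isLt
        have he : (⟨r - 1, Nat.sub_lt hr Nat.one_pos⟩ : Fin r) = j := Fin.ext (by show r - 1 = (j : ℕ); omega)
        rw [he]
        exact Nat.lt_succ_of_le hb.2
end
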